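/- arXiv:1801.01327 — 11 statements merged into one kernel-verified Lean document; each statement's English description precedes it below -/
import Mathlib

section
/- Let A ∈ B(E,F) have generalized inverse A⁺ and let T satisfy ‖T − A‖ < ‖A⁺‖⁻¹. Set B = A⁺ C_A(A⁺,T)⁻¹ where C_A(A⁺,T) = I_F + (T − A)A⁺. Then B T B = B and T B T − T = −(I_F − A A⁺) C_A(A⁺,T)⁻¹ T. -/
open ContinuousLinearMap

variable {E F : Type*} [NormedAddCommGroup E] [NormedSpace ℝ E] [CompleteSpace E]
  [NormedAddCommGroup F] [NormedSpace ℝ F] [CompleteSpace F]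

theorem stmt2 (A T : E →L[ℝ] F) (Ap : F →L[ℝ] E)
    (h1 : A ∘L (Ap ∘L A) = A) (h2 : Ap ∘L (A ∘L Ap) = Ap)
    (hT : ‖T - A‖ < ‖Ap‖⁻¹)
    (B : F →L[ℝ] E)
    (hB : B = Ap ∘L Ring.inverse (ContinuousLinearMap.id ℝ F + (T - A) ∘L Ap)) :
    B ∘L (T ∘L B) = B ∧
      T ∘L (B ∘L T) - T =
        -((ContinuousLinearMap.id ℝ F - A ∘L Ap) ∘L
          (Ring.inverse (ContinuousLinearMap.id ℝ F + (T - A) ∘L Ap) ∘L T)) := by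
  have hApos : 0 < ‖Ap‖ := by
    rcases (norm_nonneg Ap).lt_or_eq with h | h
    · exact h
    · exfalso
      rw [← h] at hT
      simp at hT
      exact absurd hT (not_lt.2 (norm_nonneg _))
  have hu : ‖(T - A) ∘L Ap‖ < 1 := by
    calc ‖(T - A) ∘L Ap‖ ≤ ‖T - A‖ * ‖Ap‖ := opNorm_comp_le _ _
      _ < ‖Ap‖⁻¹ * ‖Ap‖ := by exact mul_lt_mul_of_pos_right hT hApos
      _ = 1 := inv_mul_cancel₀ hApos.ne'
  have hv : ‖Ap ∘L (T - A)‖ < 1 := by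
    calc ‖Ap ∘L (T - A)‖ ≤ ‖Ap‖ * ‖T - A‖ := opNorm_comp_le _ _
      _ < ‖Ap‖ * ‖Ap‖⁻¹ := by exact mul_lt_mul_of_pos_left hT hApos
      _ = 1 := mul_inv_cancel₀ hApos.ne'
  set C : F →L[ℝ] F := ContinuousLinearMap.id ℝ F + (T - A) ∘L Ap with hCdef
  set Ci : F →L[ℝ] F := Ring.inverse C with hCidef
  set D : E →L[ℝ] E := ContinuousLinearMap.id ℝ E + Ap ∘L (T - A) with hDdef
  set Di : E →L[ℝ] E := Ring.inverse D with hDidef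
  have hCunit : IsUnit C := by
    have h := (Units.oneSub (-((T - A) ∘L Ap)) (by rwa [norm_neg])).isUnit
    rw [Units.val_oneSub, sub_neg_eq_add] at h
    have he : (1 : F →L[ℝ] F) + (T - A) ∘L Ap = C := by rw [hCdef]; rfl
    rwa [he] at h
  have hDunit : IsUnit D := by
    have h := (Units.oneSub (-(Ap ∘L (T - A))) (by rwa [norm_neg])).isUnit
    rw [Units.val_oneSub, sub_neg_eq_add] at h
    have he : (1 : E →L[ℝ] E) + Ap ∘L (T - A) = D := by rw [hDdef]; rfl
    rwa [he] at h
  have hCCi : C ∘L Ci = ContinuousLinearMap.id ℝ F := Ring.mul_inverse_cancel C hCunit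
  have hCiC : Ci ∘L C = ContinuousLinearMap.id ℝ F := Ring.inverse_mul_cancel C hCunit
  have hDDi : D ∘L Di = ContinuousLinearMap.id ℝ E := Ring.mul_inverse_cancel D hDunit
  have hDiD : Di ∘L D = ContinuousLinearMap.id ℝ E := Ring.inverse_mul_cancel D hDunit
  -- pointwise versions
  have pCCi : ∀ x, C (Ci x) = x := fun x => by
    have := DFunLike.congr_fun hCCi x; simpa using this
  have pDiD : ∀ x, Di (D x) = x := fun x => by
    have := DFunLike.congr_fun hDiD x; simpa using this
  have h2p : ∀ y, Ap (A (Ap y)) = Ap y := fun y => by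
    have := DFunLike.congr_fun h2 y; simpa using this
  have key1p : ∀ x, Ap (C x) = D (Ap x) := fun x => by
    simp [hCdef, hDdef]
  have key2p : ∀ x, Ap (Ci x) = Di (Ap x) := fun x => by
    calc Ap (Ci x) = Di (D (Ap (Ci x))) := (pDiD _).symm
      _ = Di (Ap (C (Ci x))) := by rw [key1p]
      _ = Di (Ap x) := by rw [pCCi]
  have keyATAp : ∀ y, Ap (T (Ap y)) = D (Ap y) := fun y => by
    simp only [hDdef, add_apply, ContinuousLinearMap.id_apply, comp_apply, sub_apply,
      map_sub]
    rw [h2p]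
    abel
  constructor
  · ext x
    simp only [hB, comp_apply]
    rw [key2p, keyATAp, pDiD]
  · ext x
    simp only [hB, comp_apply, sub_apply, neg_apply, ContinuousLinearMap.id_apply]
    set y := Ci (T x) with hy
    have hTx : C y = T x := pCCi (T x)
    rw [← hTx]
    simp only [hCdef, add_apply, ContinuousLinearMap.id_apply, comp_apply, sub_apply,
      map_sub]
    abel
end

section
/- Let A ∈ B(E,F) have generalized inverse A⁺, and T ∈ B(E,F) with ‖T − A‖ < ‖A⁺‖⁻¹. Then R(T) ∩ N(A⁺) = {0} if and only if B = A⁺ C_A(A⁺,T)⁻¹ is a generalized inverse of T (i.e., T B T = T and B T B = B). -/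
/-!
Write `C = C_A(A⁺, T)`, `D = C⁻¹` and `B = A⁺ D`. Since `T A⁺ = C - (I - A A⁺)`, we get
`T B = I - (I - A A⁺) D`, and `A⁺ (I - A A⁺) = 0` shows that `I - T B` maps into `N(A⁺)`.
On the other hand `C`, hence `D`, is the identity on `N(A⁺)`, so `B` vanishes there.
The first fact gives `B T B = B` and puts `(I - T B) T x` in `R(T) ∩ N(A⁺)`, so the trivial
intersection forces `T B T = T`; the second shows that `T B T = T` makes every `T x ∈ N(A⁺)`
equal to `T B (T x) = 0`.
-/

namespace ContinuousLinearMap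

section Algebraic

variable {R E F G : Type*} [Ring R]
  [TopologicalSpace E] [AddCommGroup E] [Module R E]
  [TopologicalSpace F] [AddCommGroup F] [Module R F]
  [TopologicalSpace G] [AddCommGroup G] [Module R G]

theorem range_inf_ker_eq_bot_iff_comp_comp_eq {T : E →L[R] F} {B : F →L[R] E} {S : F →L[R] G}
    (h_sub : ∀ y, S (y - T (B y)) = 0) (h_ker : ∀ y, S y = 0 → B y = 0) :
    LinearMap.range (T : E →ₗ[R] F) ⊓ LinearMap.ker (S : F →ₗ[R] G) = ⊥ ↔
      T ∘L (B ∘L T) = T := by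
  constructor
  · intro h
    ext x
    have hx : T x - T (B (T x)) ∈
        LinearMap.range (T : E →ₗ[R] F) ⊓ LinearMap.ker (S : F →ₗ[R] G) :=
      ⟨⟨x - B (T x), by simp⟩, h_sub (T x)⟩
    rw [h, Submodule.mem_bot, sub_eq_zero] at hx
    exact hx.symm
  · intro h
    refine (Submodule.eq_bot_iff _).2 ?_
    rintro _ ⟨⟨x, rfl⟩, hx⟩
    change T x = 0
    have hTBT : T (B (T x)) = T x := DFunLike.congr_fun h x
    rw [← hTBT, h_ker (T x) hx, map_zero]

variable [IsTopologicalAddGroup F]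

/-- The operator `C_A(A⁺, T)`. -/
noncomputable def perturbationOp (A T : E →L[R] F) (Ap : F →L[R] E) : F →L[R] F :=
  ContinuousLinearMap.id R F + (T - A) ∘L Ap

/-- The operator `B = A⁺ C_A(A⁺, T)⁻¹`; `Ring.inverse` is `0` when `C_A(A⁺, T)` is not a unit. -/
noncomputable def perturbedInverse (A T : E →L[R] F) (Ap : F →L[R] E) : F →L[R] E :=
  Ap ∘L Ring.inverse (perturbationOp A T Ap)

variable {A T : E →L[R] F} {Ap : F →L[R] E}

theorem perturbationOp_apply (y : F) :
    perturbationOp A T Ap y = y + T (Ap y) - A (Ap y) := by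
  simp [perturbationOp, add_sub_assoc]

theorem inverse_perturbationOp_apply_of_map_eq_zero (hC : IsUnit (perturbationOp A T Ap))
    {y : F} (hy : Ap y = 0) : Ring.inverse (perturbationOp A T Ap) y = y := by
  have hCy : perturbationOp A T Ap y = y := by simp [perturbationOp_apply, hy]
  conv_lhs => rw [← hCy, ← mul_apply_eq_comp, Ring.inverse_mul_cancel _ hC, one_apply_eq_self]

theorem perturbedInverse_apply_of_map_eq_zero (hC : IsUnit (perturbationOp A T Ap))
    {y : F} (hy : Ap y = 0) : perturbedInverse A T Ap y = 0 := by
  rw [perturbedInverse, comp_apply, inverse_perturbationOp_apply_of_map_eq_zero hC hy, hy]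

theorem apply_perturbedInverse (hC : IsUnit (perturbationOp A T Ap)) (y : F) :
    T (perturbedInverse A T Ap y) =
      y - (Ring.inverse (perturbationOp A T Ap) y -
        A (Ap (Ring.inverse (perturbationOp A T Ap) y))) := by
  have h : perturbationOp A T Ap (Ring.inverse (perturbationOp A T Ap) y) = y := by
    rw [← mul_apply_eq_comp, Ring.mul_inverse_cancel _ hC, one_apply_eq_self]
  rw [perturbationOp_apply] at h
  refine eq_sub_of_add_eq (Eq.trans ?_ h)
  rw [perturbedInverse, comp_apply]
  abel

theorem map_sub_apply_perturbedInverse (h2 : Ap ∘L (A ∘L Ap) = Ap)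
    (hC : IsUnit (perturbationOp A T Ap)) (y : F) :
    Ap (y - T (perturbedInverse A T Ap y)) = 0 := by
  rw [apply_perturbedInverse hC, sub_sub_cancel, map_sub, sub_eq_zero]
  exact (DFunLike.congr_fun h2 _).symm

theorem perturbedInverse_comp_comp (h2 : Ap ∘L (A ∘L Ap) = Ap)
    (hC : IsUnit (perturbationOp A T Ap)) :
    perturbedInverse A T Ap ∘L (T ∘L perturbedInverse A T Ap) = perturbedInverse A T Ap := by
  ext y
  have h := perturbedInverse_apply_of_map_eq_zero hC (map_sub_apply_perturbedInverse h2 hC y)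
  rw [map_sub, sub_eq_zero] at h
  exact h.symm

end Algebraic

theorem isUnit_perturbationOp {𝕜 E F : Type*} [NontriviallyNormedField 𝕜]
    [NormedAddCommGroup E] [NormedSpace 𝕜 E] [NormedAddCommGroup F] [NormedSpace 𝕜 F]
    [CompleteSpace F] {A T : E →L[𝕜] F} {Ap : F →L[𝕜] E} (hT : ‖T - A‖ < ‖Ap‖⁻¹) :
    IsUnit (perturbationOp A T Ap) := by
  have hAp : 0 < ‖Ap‖ := inv_pos.1 ((norm_nonneg _).trans_lt hT)
  have h : ‖-((T - A) ∘L Ap)‖ < 1 :=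
    calc ‖-((T - A) ∘L Ap)‖ ≤ ‖T - A‖ * ‖Ap‖ := (norm_neg _).trans_le (opNorm_comp_le _ _)
      _ < ‖Ap‖⁻¹ * ‖Ap‖ := mul_lt_mul_of_pos_right hT hAp
      _ = 1 := inv_mul_cancel₀ hAp.ne'
  have hC := isUnit_one_sub_of_norm_lt_one h
  rwa [sub_neg_eq_add, one_def] at hC

end ContinuousLinearMap

open ContinuousLinearMap

variable {E F : Type*} [NormedAddCommGroup E] [NormedSpace ℝ E] [CompleteSpace E]
  [NormedAddCommGroup F] [NormedSpace ℝ F] [CompleteSpace F]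

theorem stmt3_general (A T : E →L[ℝ] F) (Ap : F →L[ℝ] E)
    (h2 : Ap ∘L (A ∘L Ap) = Ap)
    (hT : ‖T - A‖ < ‖Ap‖⁻¹)
    (B : F →L[ℝ] E)
    (hB : B = Ap ∘L Ring.inverse (ContinuousLinearMap.id ℝ F + (T - A) ∘L Ap)) :
    LinearMap.range (T : E →ₗ[ℝ] F) ⊓ LinearMap.ker (Ap : F →ₗ[ℝ] E) = ⊥ ↔
      (T ∘L (B ∘L T) = T ∧ B ∘L (T ∘L B) = B) := by
  change B = perturbedInverse A T Ap at hB
  subst hB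
  have hC := isUnit_perturbationOp hT
  rw [range_inf_ker_eq_bot_iff_comp_comp_eq (map_sub_apply_perturbedInverse h2 hC)
      (fun _ => perturbedInverse_apply_of_map_eq_zero hC),
    and_iff_left (perturbedInverse_comp_comp h2 hC)]

theorem stmt3 (A T : E →L[ℝ] F) (Ap : F →L[ℝ] E)
    (h1 : A ∘L (Ap ∘L A) = A) (h2 : Ap ∘L (A ∘L Ap) = Ap)
    (hT : ‖T - A‖ < ‖Ap‖⁻¹)
    (B : F →L[ℝ] E)
    (hB : B = Ap ∘L Ring.inverse (ContinuousLinearMap.id ℝ F + (T - A) ∘L Ap)) :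
    LinearMap.range (T : E →ₗ[ℝ] F) ⊓ LinearMap.ker (Ap : F →ₗ[ℝ] E) = ⊥ ↔
      (T ∘L (B ∘L T) = T ∧ B ∘L (T ∘L B) = B) :=
  stmt3_general A T Ap h2 hT B hB
end

section
/- Let A ∈ B(E,F) have generalized inverse A⁺ and T ∈ B(E,F) with ‖T − A‖ < ‖A⁺‖⁻¹. Then the condition C_A(A⁺,T)⁻¹ T (N(A)) ⊆ R(A) is equivalent to R(C_A(A⁺,T)⁻¹ T) ⊆ R(A). -/
/-!
With `P = A⁺A` one has `AP = A`, so every `x` splits as `Px + (x - Px)` with `x - Px ∈ N(A)`.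
Since `C A = A + (T - A)A⁺A = T A⁺A`, the operator `B = C⁻¹T` satisfies `BP = A`, hence
`Bx = Ax + B(x - Px) ∈ R(A) + B(N(A))`, which gives `R(B) ⊆ R(A)` from `B(N(A)) ⊆ R(A)`.
-/

open ContinuousLinearMap

theorem LinearMap.map_ker_le_range_iff_range_le_range {R M N : Type*} [Ring R]
    [AddCommGroup M] [Module R M] [AddCommGroup N] [Module R N]
    (A B : M →ₗ[R] N) (P : M →ₗ[R] M) (hAP : A ∘ₗ P = A) (hBP : range (B ∘ₗ P) ≤ range A) :
    Submodule.map B (ker A) ≤ range A ↔ range B ≤ range A := by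
  refine ⟨fun h => ?_, fun h => LinearMap.map_le_range.trans h⟩
  rintro _ ⟨x, rfl⟩
  have hker : x - P x ∈ ker A := by
    rw [mem_ker, map_sub, sub_eq_zero]
    exact (LinearMap.congr_fun hAP x).symm
  have hsplit : B x = B (P x) + B (x - P x) := by rw [← map_add, add_sub_cancel]
  rw [hsplit]
  exact add_mem (hBP (mem_range_self _ x)) (h (Submodule.mem_map_of_mem hker))

theorem isUnit_id_add_comp_of_norm_lt_inv {𝕜 E F : Type*} [NontriviallyNormedField 𝕜]
    [NormedAddCommGroup E] [NormedSpace 𝕜 E] [NormedAddCommGroup F] [NormedSpace 𝕜 F]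
    [CompleteSpace F] (S : E →L[𝕜] F) (Ap : F →L[𝕜] E) (hS : ‖S‖ < ‖Ap‖⁻¹) :
    IsUnit (ContinuousLinearMap.id 𝕜 F + S ∘L Ap) := by
  have hAp : 0 < ‖Ap‖ := inv_pos.mp ((norm_nonneg S).trans_lt hS)
  have hnorm : ‖-(S ∘L Ap)‖ < 1 :=
    calc ‖-(S ∘L Ap)‖ ≤ ‖S‖ * ‖Ap‖ := (norm_neg (S ∘L Ap)).trans_le (opNorm_comp_le S Ap)
      _ < ‖Ap‖⁻¹ * ‖Ap‖ := mul_lt_mul_of_pos_right hS hAp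
      _ = 1 := inv_mul_cancel₀ hAp.ne'
  simpa [sub_neg_eq_add, one_def] using isUnit_one_sub_of_norm_lt_one hnorm

theorem id_add_sub_comp_comp_eq {𝕜 E F : Type*} [NontriviallyNormedField 𝕜]
    [NormedAddCommGroup E] [NormedSpace 𝕜 E] [NormedAddCommGroup F] [NormedSpace 𝕜 F]
    (A T : E →L[𝕜] F) (Ap : F →L[𝕜] E) (h1 : A ∘L (Ap ∘L A) = A) :
    (ContinuousLinearMap.id 𝕜 F + (T - A) ∘L Ap) ∘L A = T ∘L (Ap ∘L A) := by
  simp only [add_comp, sub_comp, id_comp, comp_assoc, h1]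
  abel

variable {E F : Type*} [NormedAddCommGroup E] [NormedSpace ℝ E] [CompleteSpace E]
  [NormedAddCommGroup F] [NormedSpace ℝ F] [CompleteSpace F]

theorem stmt5_general (A T : E →L[ℝ] F) (Ap : F →L[ℝ] E)
    (h1 : A ∘L (Ap ∘L A) = A)
    (hT : ‖T - A‖ < ‖Ap‖⁻¹) :
    Submodule.map ((Ring.inverse (ContinuousLinearMap.id ℝ F + (T - A) ∘L Ap) ∘L T : E →L[ℝ] F) : E →ₗ[ℝ] F)
        (LinearMap.ker (A : E →ₗ[ℝ] F)) ≤ LinearMap.range (A : E →ₗ[ℝ] F) ↔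
      LinearMap.range ((Ring.inverse (ContinuousLinearMap.id ℝ F + (T - A) ∘L Ap) ∘L T : E →L[ℝ] F) : E →ₗ[ℝ] F) ≤
        LinearMap.range (A : E →ₗ[ℝ] F) := by
  set C := ContinuousLinearMap.id ℝ F + (T - A) ∘L Ap
  have hC : IsUnit C := isUnit_id_add_comp_of_norm_lt_inv (T - A) Ap hT
  have hBP : (Ring.inverse C ∘L T) ∘L (Ap ∘L A) = A := by
    rw [comp_assoc, ← id_add_sub_comp_comp_eq A T Ap h1, ← comp_assoc]
    exact (congrArg (· ∘L A) (Ring.inverse_mul_cancel C hC)).trans (id_comp A)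
  refine LinearMap.map_ker_le_range_iff_range_le_range _ _ ((Ap ∘L A : E →L[ℝ] E) : E →ₗ[ℝ] E)
    (congrArg ContinuousLinearMap.toLinearMap h1) ?_
  rw [← toLinearMap_comp, hBP]

theorem stmt5 (A T : E →L[ℝ] F) (Ap : F →L[ℝ] E)
    (h1 : A ∘L (Ap ∘L A) = A) (h2 : Ap ∘L (A ∘L Ap) = Ap)
    (hT : ‖T - A‖ < ‖Ap‖⁻¹) :
    Submodule.map ((Ring.inverse (ContinuousLinearMap.id ℝ F + (T - A) ∘L Ap) ∘L T : E →L[ℝ] F) : E →ₗ[ℝ] F)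
        (LinearMap.ker (A : E →ₗ[ℝ] F)) ≤ LinearMap.range (A : E →ₗ[ℝ] F) ↔
      LinearMap.range ((Ring.inverse (ContinuousLinearMap.id ℝ F + (T - A) ∘L Ap) ∘L T : E →L[ℝ] F) : E →ₗ[ℝ] F) ≤
        LinearMap.range (A : E →ₗ[ℝ] F) :=
  stmt5_general A T Ap h1 hT
end

section
/- Let A ∈ B(E,F) have generalized inverse A⁺ and T ∈ B(E,F) with ‖T − A‖ < ‖A⁺‖⁻¹. If R(T) ∩ N(A⁺) = {0}, then F = R(T) ⊕ N(A⁺) and E = N(T) ⊕ R(A⁺) (direct sums of closed subspaces). -/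
/-!
Put `C = 1 + (T - A) A⁺` and `D = 1 + A⁺ (T - A)`; both are invertible by the Neumann series
since `‖T - A‖ ‖A⁺‖ < 1`, and `A⁺ C = A⁺ T A⁺ = D A⁺` because `A⁺ A A⁺ = A⁺`.
Hence `P = T A⁺ C⁻¹` satisfies `A⁺ P = A⁺` and has range in `R(T)`; as `R(T) ∩ N(A⁺) = 0`,
`P` is a projection onto `R(T)` along `N(A⁺)`, so `R(T)` is closed and complemented by `N(A⁺)`.
Similarly `Q = A⁺ C⁻¹ T` satisfies `T Q = P T = T`, so `N(T) + R(A⁺) = E`, while on `R(A⁺)`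
the map `D` agrees with `A⁺ T`, so injectivity of `D` gives `N(T) ∩ R(A⁺) = 0`.
-/

open ContinuousLinearMap

namespace LinearMap

variable {R M N : Type*} [Ring R] [AddCommGroup M] [Module R M] [AddCommGroup N] [Module R N]

section

variable {f : M →ₗ[R] N} {g : M →ₗ[R] M}

theorem sub_apply_mem_ker_of_comp_eq (h : f ∘ₗ g = f) (x : M) : x - g x ∈ ker f := by
  rw [mem_ker, map_sub, ← comp_apply, h, sub_self]

theorem codisjoint_range_ker_of_comp_eq (h : f ∘ₗ g = f) : Codisjoint (range g) (ker f) := by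
  rw [codisjoint_iff_le_sup]
  intro x _
  exact Submodule.mem_sup.2
    ⟨g x, mem_range_self g x, x - g x, sub_apply_mem_ker_of_comp_eq h x, add_sub_cancel _ _⟩

theorem coe_eq_setOf_apply_eq_self_of_comp_eq {U : Submodule R M} (hg : range g ≤ U)
    (hU : Disjoint U (ker f)) (h : f ∘ₗ g = f) : (U : Set M) = {x | g x = x} := by
  ext x
  refine ⟨fun hx => ?_, fun hx => hx ▸ hg (mem_range_self g x)⟩
  have hmem : x - g x ∈ U ⊓ ker f :=
    Submodule.mem_inf.2
      ⟨U.sub_mem hx (hg (mem_range_self g x)), sub_apply_mem_ker_of_comp_eq h x⟩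
  rw [hU.eq_bot, Submodule.mem_bot, sub_eq_zero] at hmem
  exact hmem.symm

end

theorem disjoint_ker_range_of_injective_of_comp_eq {S : M →ₗ[R] N} {B : N →ₗ[R] M}
    {D : M →ₗ[R] M} (hD : Function.Injective D) (h : D ∘ₗ B = B ∘ₗ S ∘ₗ B) :
    Disjoint (ker S) (range B) := by
  rw [Submodule.disjoint_def]
  rintro _ hx ⟨y, rfl⟩
  refine hD ?_
  rw [map_zero, ← comp_apply, h, comp_apply, comp_apply, mem_ker.1 hx, map_zero]

end LinearMap

theorem isUnit_one_add_of_norm_lt_one {R : Type*} [NormedRing R] [HasSummableGeomSeries R]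
    {x : R} (h : ‖x‖ < 1) : IsUnit (1 + x) := by
  simpa using isUnit_one_sub_of_norm_lt_one (x := -x) (by rwa [norm_neg])

namespace ContinuousLinearMap

variable {𝕜 V W : Type*} [NontriviallyNormedField 𝕜] [NormedAddCommGroup V] [NormedSpace 𝕜 V]
  [NormedAddCommGroup W] [NormedSpace 𝕜 W]

theorem norm_mul_norm_lt_one_of_norm_lt_inv {S : V →L[𝕜] W} {B : W →L[𝕜] V}
    (h : ‖S‖ < ‖B‖⁻¹) : ‖S‖ * ‖B‖ < 1 := by
  have hB : 0 < ‖B‖ := inv_pos.1 ((norm_nonneg S).trans_lt h)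
  calc ‖S‖ * ‖B‖ < ‖B‖⁻¹ * ‖B‖ := by gcongr
    _ = 1 := inv_mul_cancel₀ hB.ne'

theorem isUnit_one_add_comp_of_norm_lt_inv [CompleteSpace W] {S : V →L[𝕜] W} {B : W →L[𝕜] V}
    (h : ‖S‖ < ‖B‖⁻¹) : IsUnit (1 + S ∘L B) :=
  isUnit_one_add_of_norm_lt_one <|
    (opNorm_comp_le S B).trans_lt (norm_mul_norm_lt_one_of_norm_lt_inv h)

theorem isUnit_one_add_comp_of_norm_lt_inv' [CompleteSpace V] {S : V →L[𝕜] W} {B : W →L[𝕜] V}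
    (h : ‖S‖ < ‖B‖⁻¹) : IsUnit (1 + B ∘L S) :=
  isUnit_one_add_of_norm_lt_one <| (opNorm_comp_le B S).trans_lt <|
    (mul_comm ‖B‖ ‖S‖).trans_lt (norm_mul_norm_lt_one_of_norm_lt_inv h)

variable {A T : V →L[𝕜] W} {Ap : W →L[𝕜] V}

theorem comp_one_add_sub_comp (hAp : Ap ∘L (A ∘L Ap) = Ap) :
    Ap ∘L (1 + (T - A) ∘L Ap) = Ap ∘L T ∘L Ap := by
  ext y
  have h2y : Ap (A (Ap y)) = Ap y := congr($hAp y)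
  simp [h2y]

theorem one_add_comp_sub_comp (hAp : Ap ∘L (A ∘L Ap) = Ap) :
    (1 + Ap ∘L (T - A)) ∘L Ap = Ap ∘L T ∘L Ap := by
  ext y
  have h2y : Ap (A (Ap y)) = Ap y := congr($hAp y)
  simp [h2y]

end ContinuousLinearMap

variable {E F : Type*} [NormedAddCommGroup E] [NormedSpace ℝ E] [CompleteSpace E]
  [NormedAddCommGroup F] [NormedSpace ℝ F] [CompleteSpace F]

theorem stmt7_general (A T : E →L[ℝ] F) (Ap : F →L[ℝ] E)
    (h2 : Ap ∘L (A ∘L Ap) = Ap)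
    (hT : ‖T - A‖ < ‖Ap‖⁻¹)
    (hR : LinearMap.range (T : E →ₗ[ℝ] F) ⊓ LinearMap.ker (Ap : F →ₗ[ℝ] E) = ⊥) :
    IsClosed (LinearMap.range (T : E →ₗ[ℝ] F) : Set F) ∧
      IsCompl (LinearMap.range (T : E →ₗ[ℝ] F)) (LinearMap.ker (Ap : F →ₗ[ℝ] E)) ∧
      IsCompl (LinearMap.ker (T : E →ₗ[ℝ] F)) (LinearMap.range (Ap : F →ₗ[ℝ] E)) := by
  obtain ⟨C, hC⟩ := isUnit_one_add_comp_of_norm_lt_inv hT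
  have hD := isUnit_one_add_comp_of_norm_lt_inv' hT
  have hdisj : Disjoint (LinearMap.range (T : E →ₗ[ℝ] F)) (LinearMap.ker (Ap : F →ₗ[ℝ] E)) :=
    disjoint_iff.2 hR
  set P : F →L[ℝ] F := T ∘L Ap ∘L ↑C⁻¹
  have hApP : Ap ∘L P = Ap :=
    calc Ap ∘L P = (Ap ∘L T ∘L Ap) ∘L ↑C⁻¹ := by simp only [P, comp_assoc]
      _ = (Ap ∘L (C : F →L[ℝ] F)) ∘L ↑C⁻¹ := by rw [hC, comp_one_add_sub_comp h2]
      _ = Ap := by rw [comp_assoc, ← mul_def, C.mul_inv]; exact comp_id Ap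
  have hApP' : (Ap : F →ₗ[ℝ] E) ∘ₗ (P : F →ₗ[ℝ] F) = Ap := congr(($hApP : F →ₗ[ℝ] E))
  have hPT := LinearMap.range_comp_le_range ((Ap ∘L ↑C⁻¹ : F →L[ℝ] E) : F →ₗ[ℝ] E)
    (T : E →ₗ[ℝ] F)
  have hfix := LinearMap.coe_eq_setOf_apply_eq_self_of_comp_eq hPT hdisj hApP'
  set Q : E →L[ℝ] E := Ap ∘L ↑C⁻¹ ∘L T
  have hTQ : (T : E →ₗ[ℝ] F) ∘ₗ (Q : E →ₗ[ℝ] E) = T := by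
    ext x
    exact (hfix ▸ LinearMap.mem_range_self _ x : T x ∈ {y | P y = y})
  have hQAp := LinearMap.range_comp_le_range ((↑C⁻¹ ∘L T : E →L[ℝ] F) : E →ₗ[ℝ] F)
    (Ap : F →ₗ[ℝ] E)
  refine ⟨?_, ⟨hdisj, ?_⟩, ⟨?_, ?_⟩⟩
  · rw [hfix]
    exact isClosed_eq P.continuous continuous_id
  · exact (LinearMap.codisjoint_range_ker_of_comp_eq hApP').mono_left hPT
  · exact LinearMap.disjoint_ker_range_of_injective_of_comp_eq (isUnit_iff_bijective.1 hD).1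
      congr(($(one_add_comp_sub_comp h2) : F →ₗ[ℝ] E))
  · exact ((LinearMap.codisjoint_range_ker_of_comp_eq hTQ).mono_left hQAp).symm

theorem stmt7 (A T : E →L[ℝ] F) (Ap : F →L[ℝ] E)
    (h1 : A ∘L (Ap ∘L A) = A) (h2 : Ap ∘L (A ∘L Ap) = Ap)
    (hT : ‖T - A‖ < ‖Ap‖⁻¹)
    (hR : LinearMap.range (T : E →ₗ[ℝ] F) ⊓ LinearMap.ker (Ap : F →ₗ[ℝ] E) = ⊥) :
    IsClosed (LinearMap.range (T : E →ₗ[ℝ] F) : Set F) ∧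
      IsCompl (LinearMap.range (T : E →ₗ[ℝ] F)) (LinearMap.ker (Ap : F →ₗ[ℝ] E)) ∧
      IsCompl (LinearMap.ker (T : E →ₗ[ℝ] F)) (LinearMap.range (Ap : F →ₗ[ℝ] E)) :=
  stmt7_general A T Ap h2 hT hR
end

section
/- Let A ∈ B(E,F) have generalized inverse A⁺, dim E = ∞ permitted, and suppose rank A = k < ∞. If T ∈ B(E,F) satisfies ‖T − A‖ < ‖A⁺‖⁻¹ and R(T) ∩ N(A⁺) = {0}, then rank T = k. -/
/-!
`M = A⁺(R(A))` is `k`-dimensional, since `AA⁺A = A` makes `A⁺` injective on `R(A)`; likewise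
`R(T) ≅ A⁺(R(T))` because `R(T) ∩ N(A⁺) = 0`. Every `z ∈ M` is fixed by `A⁺A`, so
`A⁺Tz = z + A⁺(T - A)z` with `‖A⁺(T - A)‖ < 1`, and `A⁺T` is injective on `M`. Since
`A⁺T(M) ⊆ A⁺(R(T)) ⊆ R(A⁺) = M`, counting dimensions gives `A⁺(R(T)) = M`, hence `rank T = k`.
-/

namespace Submodule

variable {R V W : Type*} [Ring R] [AddCommGroup V] [Module R V] [AddCommGroup W] [Module R W]

noncomputable def equivMapOfDisjointKer (p : Submodule R V) (f : V →ₗ[R] W)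
    (h : Disjoint p (LinearMap.ker f)) : p ≃ₗ[R] p.map f :=
  (LinearEquiv.ofInjective _ (LinearMap.injective_domRestrict_iff.mpr h)).trans
    (LinearEquiv.ofEq _ _ (LinearMap.range_domRestrict p f))

theorem eq_of_le_of_map_le_of_disjoint_ker {K : Type*} [DivisionRing K] [Module K V]
    {p q : Submodule K V} [FiniteDimensional K p] {f : V →ₗ[K] V} (hqp : q ≤ p)
    (hpq : p.map f ≤ q) (hd : Disjoint p (LinearMap.ker f)) : q = p := by
  have : FiniteDimensional K q := finiteDimensional_of_le hqp
  refine eq_of_le_of_finrank_le hqp ?_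
  rw [(equivMapOfDisjointKer p f hd).finrank_eq]
  exact finrank_mono hpq

end Submodule

namespace LinearMap

variable {R V W : Type*} [Ring R] [AddCommGroup V] [Module R V] [AddCommGroup W] [Module R W]
  {A : V →ₗ[R] W} {B : W →ₗ[R] V}

theorem disjoint_range_ker_of_comp_comp_eq (h : A ∘ₗ B ∘ₗ A = A) :
    Disjoint (range A) (ker B) := by
  rw [disjoint_ker]
  rintro _ ⟨x, rfl⟩ hx
  rw [← h]
  simp [hx]

theorem apply_apply_eq_self_of_mem_map_range (h : A ∘ₗ B ∘ₗ A = A) {z : V}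
    (hz : z ∈ (range A).map B) : B (A z) = z := by
  obtain ⟨_, ⟨x, rfl⟩, rfl⟩ := hz
  exact congr(B ($h x))

theorem range_le_map_range_of_comp_comp_eq (h : B ∘ₗ A ∘ₗ B = B) :
    range B ≤ (range A).map B := by
  rintro _ ⟨y, rfl⟩
  exact ⟨A (B y), mem_range_self _ _, congr($h y)⟩

end LinearMap

namespace ContinuousLinearMap

variable {𝕜 V W : Type*} [NontriviallyNormedField 𝕜] [NormedAddCommGroup V] [NormedSpace 𝕜 V]
  [NormedAddCommGroup W] [NormedSpace 𝕜 W]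

theorem disjoint_map_range_ker_comp {A T : V →L[𝕜] W} {B : W →L[𝕜] V}
    (h : A ∘L B ∘L A = A) (hBT : ‖B‖ * ‖T - A‖ < 1) :
    Disjoint ((LinearMap.range (A : V →ₗ[𝕜] W)).map (B : W →ₗ[𝕜] V))
      (LinearMap.ker ((B : W →ₗ[𝕜] V) ∘ₗ (T : V →ₗ[𝕜] W))) := by
  rw [LinearMap.disjoint_ker]
  intro z hz hTz
  have hfix : B (A z) = z :=
    LinearMap.apply_apply_eq_self_of_mem_map_range (congrArg toLinearMap h) hz
  by_contra hz0
  have hle : ‖z‖ ≤ ‖B‖ * ‖T - A‖ * ‖z‖ :=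
    calc ‖z‖ = ‖B ((A - T) z)‖ := by
          rw [sub_apply, map_sub, hfix, show B (T z) = 0 from hTz, sub_zero]
      _ ≤ ‖B‖ * ‖(A - T) z‖ := B.le_opNorm _
      _ ≤ ‖B‖ * (‖A - T‖ * ‖z‖) := by gcongr; exact (A - T).le_opNorm z
      _ = ‖B‖ * ‖T - A‖ * ‖z‖ := by rw [norm_sub_rev, mul_assoc]
  nlinarith [norm_pos_iff.mpr hz0]

end ContinuousLinearMap

open ContinuousLinearMap

variable {E F : Type*} [NormedAddCommGroup E] [NormedSpace ℝ E] [CompleteSpace E]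
  [NormedAddCommGroup F] [NormedSpace ℝ F] [CompleteSpace F]

theorem stmt8 (A T : E →L[ℝ] F) (Ap : F →L[ℝ] E)
    (h1 : A ∘L (Ap ∘L A) = A) (h2 : Ap ∘L (A ∘L Ap) = Ap)
    (k : ℕ) (hfinA : FiniteDimensional ℝ (LinearMap.range (A : E →ₗ[ℝ] F)))
    (hrankA : Module.finrank ℝ (LinearMap.range (A : E →ₗ[ℝ] F)) = k)
    (hT : ‖T - A‖ < ‖Ap‖⁻¹)
    (hR : LinearMap.range (T : E →ₗ[ℝ] F) ⊓ LinearMap.ker (Ap : F →ₗ[ℝ] E) = ⊥) :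
    FiniteDimensional ℝ (LinearMap.range (T : E →ₗ[ℝ] F)) ∧
      Module.finrank ℝ (LinearMap.range (T : E →ₗ[ℝ] F)) = k := by
  have hAp : 0 < ‖Ap‖ := inv_pos.mp ((norm_nonneg _).trans_lt hT)
  have hBT : ‖Ap‖ * ‖T - A‖ < 1 :=
    (mul_lt_mul_of_pos_left hT hAp).trans_eq (mul_inv_cancel₀ hAp.ne')
  let eA := Submodule.equivMapOfDisjointKer _ _
    (LinearMap.disjoint_range_ker_of_comp_comp_eq (congrArg toLinearMap h1))
  have := Module.Finite.equiv eA
  have hmap : (LinearMap.range (T : E →ₗ[ℝ] F)).map (Ap : F →ₗ[ℝ] E)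
      = (LinearMap.range (A : E →ₗ[ℝ] F)).map (Ap : F →ₗ[ℝ] E) :=
    Submodule.eq_of_le_of_map_le_of_disjoint_ker
      (LinearMap.map_le_range.trans
        (LinearMap.range_le_map_range_of_comp_comp_eq (congrArg toLinearMap h2)))
      (by rw [Submodule.map_comp]; exact Submodule.map_mono LinearMap.map_le_range)
      (disjoint_map_range_ker_comp h1 hBT)
  let eT := (Submodule.equivMapOfDisjointKer _ _ (disjoint_iff.mpr hR)).trans
    (LinearEquiv.ofEq _ _ hmap)
  exact ⟨Module.Finite.equiv eT.symm, eT.finrank_eq.trans (eA.finrank_eq.symm.trans hrankA)⟩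
end

section
/- Let A ∈ B(E,F) be a finite-rank operator with rank A = k, with generalized inverse A⁺, and let T ∈ B(E,F) satisfy ‖T − A‖ < ‖A⁺‖⁻¹ and rank T = k. Then R(T) ∩ N(A⁺) = {0}. -/
/-!
Since `A A⁺ A = A`, the map `A⁺` is injective on `R(A)`, so `A⁺ A` has range `A⁺ R(A)` of dimension
`k`, and `A⁺ A` is the identity there. On that range `A⁺ T` differs from `A⁺ A` by an operator of
norm at most `‖A⁺‖ ‖T - A‖ < 1`, hence is injective, so `dim A⁺ R(T) ≥ k = dim R(T)` and `A⁺` is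
injective on `R(T)`.
-/

open ContinuousLinearMap

section LinearAlgebra

variable {K V W : Type*}

theorem Submodule.finrank_map_eq_of_disjoint_ker [Ring K] [AddCommGroup V] [Module K V]
    [AddCommGroup W] [Module K W] {p : Submodule K V} {f : V →ₗ[K] W}
    (h : Disjoint p (LinearMap.ker f)) :
    Module.finrank K (p.map f) = Module.finrank K p := by
  rw [← LinearMap.range_domRestrict]
  exact (LinearEquiv.ofInjective _ (LinearMap.injective_domRestrict_iff.mpr h)).finrank_eq.symm

namespace LinearMap

theorem disjoint_range_ker_of_comp_comp_eq_s9 [Ring K] [AddCommGroup V] [Module K V]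
    [AddCommGroup W] [Module K W] {f : V →ₗ[K] W} {g : W →ₗ[K] V} (h : f ∘ₗ g ∘ₗ f = f) :
    Disjoint (range f) (ker g) := by
  refine disjoint_ker.mpr ?_
  rintro _ ⟨x, rfl⟩ hx
  rw [← h]
  simp [hx]

theorem finrank_range_comp_eq_of_comp_comp_eq [Ring K] [AddCommGroup V] [Module K V]
    [AddCommGroup W] [Module K W] {f : V →ₗ[K] W} {g : W →ₗ[K] V} (h : f ∘ₗ g ∘ₗ f = f) :
    Module.finrank K (range (g ∘ₗ f)) = Module.finrank K (range f) := by
  rw [range_comp, Submodule.finrank_map_eq_of_disjoint_ker (disjoint_range_ker_of_comp_comp_eq_s9 h)]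

theorem range_inf_ker_eq_bot_of_finrank_range_le [DivisionRing K] [AddCommGroup V] [Module K V]
    [AddCommGroup W] [Module K W] {f t : V →ₗ[K] W} {g : W →ₗ[K] V} (hfgf : f ∘ₗ g ∘ₗ f = f)
    (hdisj : Disjoint (range (g ∘ₗ f)) (ker (g ∘ₗ t))) [FiniteDimensional K (range t)]
    (hrank : Module.finrank K (range t) ≤ Module.finrank K (range f)) :
    range t ⊓ ker g = ⊥ := by
  refine (Submodule.disjoint_ker_of_finrank_le g ?_).eq_bot
  calc Module.finrank K (range t)
      ≤ Module.finrank K (range (g ∘ₗ f)) := by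
        rwa [finrank_range_comp_eq_of_comp_comp_eq hfgf]
    _ = Module.finrank K ((range (g ∘ₗ f)).map (g ∘ₗ t)) :=
        (Submodule.finrank_map_eq_of_disjoint_ker hdisj).symm
    _ ≤ Module.finrank K ((range t).map g) :=
        Submodule.finrank_mono <| by rw [← range_comp t g]; exact map_le_range

end LinearMap

end LinearAlgebra

section Perturbation

variable {𝕜 E F : Type*} [NontriviallyNormedField 𝕜] [NormedAddCommGroup E] [NormedSpace 𝕜 E]
  [NormedAddCommGroup F] [NormedSpace 𝕜 F]

theorem eq_zero_of_norm_sub_lt_one {P S : E →L[𝕜] E} (hPS : ‖P - S‖ < 1) {x : E}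
    (hP : P x = x) (hS : S x = 0) : x = 0 := by
  have hx : (P - S) x = x := by simp [hP, hS]
  have : ‖x‖ ≤ ‖P - S‖ * ‖x‖ := by
    calc ‖x‖ = ‖(P - S) x‖ := by rw [hx]
      _ ≤ ‖P - S‖ * ‖x‖ := (P - S).le_opNorm x
  exact norm_eq_zero.mp (by nlinarith [norm_nonneg x])

namespace ContinuousLinearMap

theorem norm_comp_sub_comp_lt_one {A T : E →L[𝕜] F} {B : F →L[𝕜] E} (hT : ‖T - A‖ < ‖B‖⁻¹) :
    ‖B ∘L A - B ∘L T‖ < 1 := by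
  have hB : 0 < ‖B‖ := inv_pos.mp ((norm_nonneg _).trans_lt hT)
  calc ‖B ∘L A - B ∘L T‖ = ‖B ∘L (T - A)‖ := by rw [← comp_sub, ← norm_neg, ← comp_neg, neg_sub]
    _ ≤ ‖B‖ * ‖T - A‖ := opNorm_comp_le B (T - A)
    _ < 1 := (lt_inv_mul_iff₀ hB).mp (by rwa [mul_one])

theorem disjoint_range_comp_ker_comp {A T : E →L[𝕜] F} {B : F →L[𝕜] E}
    (h : A ∘L (B ∘L A) = A) (hT : ‖T - A‖ < ‖B‖⁻¹) :
    Disjoint (LinearMap.range ((B : F →ₗ[𝕜] E) ∘ₗ (A : E →ₗ[𝕜] F)))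
      (LinearMap.ker ((B : F →ₗ[𝕜] E) ∘ₗ (T : E →ₗ[𝕜] F))) := by
  refine LinearMap.disjoint_ker.mpr ?_
  rintro _ ⟨x, rfl⟩ hx
  refine eq_zero_of_norm_sub_lt_one (norm_comp_sub_comp_lt_one hT) ?_ hx
  simpa using congrArg (fun C : E →L[𝕜] F ↦ B (C x)) h

end ContinuousLinearMap

end Perturbation

variable {E F : Type*} [NormedAddCommGroup E] [NormedSpace ℝ E] [CompleteSpace E]
  [NormedAddCommGroup F] [NormedSpace ℝ F] [CompleteSpace F]

theorem stmt9_general (A T : E →L[ℝ] F) (Ap : F →L[ℝ] E)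
    (h1 : A ∘L (Ap ∘L A) = A)
    (k : ℕ)
    (hrankA : Module.finrank ℝ (LinearMap.range (A : E →ₗ[ℝ] F)) = k)
    (hT : ‖T - A‖ < ‖Ap‖⁻¹)
    (hfinT : FiniteDimensional ℝ (LinearMap.range (T : E →ₗ[ℝ] F)))
    (hrankT : Module.finrank ℝ (LinearMap.range (T : E →ₗ[ℝ] F)) = k) :
    LinearMap.range (T : E →ₗ[ℝ] F) ⊓ LinearMap.ker (Ap : F →ₗ[ℝ] E) = ⊥ :=
  LinearMap.range_inf_ker_eq_bot_of_finrank_range_le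
    (congrArg ((↑) : (E →L[ℝ] F) → E →ₗ[ℝ] F) h1) (disjoint_range_comp_ker_comp h1 hT)
    (hrankT.trans hrankA.symm).le

theorem stmt9 (A T : E →L[ℝ] F) (Ap : F →L[ℝ] E)
    (h1 : A ∘L (Ap ∘L A) = A) (h2 : Ap ∘L (A ∘L Ap) = Ap)
    (k : ℕ) (hfinA : FiniteDimensional ℝ (LinearMap.range (A : E →ₗ[ℝ] F)))
    (hrankA : Module.finrank ℝ (LinearMap.range (A : E →ₗ[ℝ] F)) = k)
    (hT : ‖T - A‖ < ‖Ap‖⁻¹)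
    (hfinT : FiniteDimensional ℝ (LinearMap.range (T : E →ₗ[ℝ] F)))
    (hrankT : Module.finrank ℝ (LinearMap.range (T : E →ₗ[ℝ] F)) = k) :
    LinearMap.range (T : E →ₗ[ℝ] F) ⊓ LinearMap.ker (Ap : F →ₗ[ℝ] E) = ⊥ :=
  stmt9_general A T Ap h1 k hrankA hT hfinT hrankT
end

section
/- Let A ∈ B(E,F) be Fredholm (dim N(A) < ∞ and codim R(A) < ∞) with generalized inverse A⁺. If T ∈ B(E,F) satisfies ‖T − A‖ < ‖A⁺‖⁻¹, dim N(T) = dim N(A) and codim R(T) = codim R(A), with R(T) closed and complemented, then R(T) ∩ N(A⁺) = {0}. -/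
/-! The operator `U = 1 + A⁺(T - A)` is invertible by the Neumann series, and `A⁺T = A⁺AU` because
`A⁺AA⁺ = A⁺`; hence `A⁺T` has the same range as `A⁺`, that is, `R(T) + N(A⁺) = F`. Since `AA⁺` is a
projection onto `R(A)` along `N(A⁺)`, the space `N(A⁺)` is a complement of `R(A)`, so its dimension
is `codim R(A) = codim R(T)`. The quotient map `N(A⁺) → F ⧸ R(T)` is thus a surjection between
spaces of the same finite dimension, hence injective: `R(T) ∩ N(A⁺) = 0`. -/

section LinearAlgebra

open LinearMap Module

variable {R M N : Type*} [Ring R] [AddCommGroup M] [Module R M] [AddCommGroup N] [Module R N]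

theorem LinearMap.isCompl_range_ker_of_comp_comp_eq (a : M →ₗ[R] N) (b : N →ₗ[R] M)
    (hab : a ∘ₗ b ∘ₗ a = a) (hba : b ∘ₗ a ∘ₗ b = b) : IsCompl (range a) (ker b) := by
  have hidem : IsIdempotentElem (a ∘ₗ b) := by
    change (a ∘ₗ b) ∘ₗ a ∘ₗ b = a ∘ₗ b
    rw [LinearMap.comp_assoc, hba]
  have hrange : range (a ∘ₗ b) = range a := by
    refine le_antisymm (range_comp_le_range b a) ?_
    calc range a = range ((a ∘ₗ b) ∘ₗ a) := by rw [LinearMap.comp_assoc, hab]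
      _ ≤ range (a ∘ₗ b) := range_comp_le_range a (a ∘ₗ b)
  have hker : ker (a ∘ₗ b) = ker b :=
    le_antisymm ((ker_le_ker_comp (a ∘ₗ b) b).trans_eq (by rw [hba])) (ker_le_ker_comp b a)
  simpa only [hrange, hker] using hidem.isCompl

theorem LinearMap.range_sup_ker_eq_top_of_range_le (T : M →ₗ[R] N) (b : N →ₗ[R] M)
    (h : range b ≤ range (b ∘ₗ T)) : range T ⊔ ker b = ⊤ := by
  rw [← Submodule.comap_map_eq, ← range_comp, eq_top_iff]
  exact fun y _ => h (mem_range_self b y)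

theorem Submodule.inf_eq_bot_of_sup_eq_top_of_finrank_eq {K V : Type*} [DivisionRing K]
    [AddCommGroup V] [Module K V] (p q : Submodule K V) [FiniteDimensional K q]
    (hsup : p ⊔ q = ⊤) (hrank : finrank K q = finrank K (V ⧸ p)) : p ⊓ q = ⊥ := by
  set f := p.mkQ ∘ₗ q.subtype
  have hsurj : Function.Surjective f := by
    rwa [← range_eq_top, range_comp, range_subtype, map_mkQ_eq_top]
  have : FiniteDimensional K (V ⧸ p) := Module.Finite.of_surjective f hsurj
  have hinj : Function.Injective f := (injective_iff_surjective_of_finrank_eq_finrank hrank).2 hsurj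
  rw [← disjoint_iff, disjoint_comm, disjoint_iff_comap_eq_bot, ← p.ker_mkQ, ← ker_comp]
  exact ker_eq_bot.2 hinj

end LinearAlgebra

section Perturbation

open LinearMap

variable {𝕜 E F : Type*} [NontriviallyNormedField 𝕜] [NormedAddCommGroup E] [NormedSpace 𝕜 E]
  [CompleteSpace E] [NormedAddCommGroup F] [NormedSpace 𝕜 F]

theorem ContinuousLinearMap.isUnit_one_add_comp_of_norm_lt_inv_s10 (S : E →L[𝕜] F) (B : F →L[𝕜] E)
    (hS : ‖S‖ < ‖B‖⁻¹) : IsUnit (1 + B ∘L S) := by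
  have hB : 0 < ‖B‖ := by
    by_contra! h
    rw [le_antisymm h (norm_nonneg B), inv_zero] at hS
    exact (norm_nonneg S).not_gt hS
  have hsmall : ‖-(B ∘L S)‖ < 1 := by
    rw [norm_neg]
    calc ‖B ∘L S‖ ≤ ‖B‖ * ‖S‖ := opNorm_comp_le B S
      _ < ‖B‖ * ‖B‖⁻¹ := mul_lt_mul_of_pos_left hS hB
      _ = 1 := mul_inv_cancel₀ hB.ne'
  simpa only [sub_neg_eq_add] using isUnit_one_sub_of_norm_lt_one hsmall

theorem ContinuousLinearMap.range_comp_eq_range_of_norm_sub_lt (A T : E →L[𝕜] F) (Ap : F →L[𝕜] E)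
    (hAp : Ap ∘L (A ∘L Ap) = Ap) (hT : ‖T - A‖ < ‖Ap‖⁻¹) :
    range (Ap ∘L T : E →ₗ[𝕜] E) = range (Ap : F →ₗ[𝕜] E) := by
  obtain ⟨U, hU⟩ := isUnit_one_add_comp_of_norm_lt_inv_s10 (T - A) Ap hT
  have hfactor : Ap ∘L T = (Ap ∘L A) ∘L (U : E →L[𝕜] E) := by
    have hApx (y : F) : Ap (A (Ap y)) = Ap y := DFunLike.congr_fun hAp y
    ext x
    simp [hU, hApx]
  have hsurj : range (U : E →ₗ[𝕜] E) = ⊤ :=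
    range_eq_top.2 (isUnit_iff_bijective.1 U.isUnit).2
  have hApA : range (Ap ∘L A : E →ₗ[𝕜] E) = range (Ap : F →ₗ[𝕜] E) := by
    refine le_antisymm (range_comp_le_range _ _) ?_
    calc range (Ap : F →ₗ[𝕜] E) = range ((Ap ∘L A) ∘L Ap : F →ₗ[𝕜] E) := by rw [comp_assoc, hAp]
      _ ≤ range (Ap ∘L A : E →ₗ[𝕜] E) := range_comp_le_range _ _
  rw [hfactor, toLinearMap_comp, range_comp_of_range_eq_top _ hsurj, hApA]

end Perturbation

open ContinuousLinearMap

variable {E F : Type*} [NormedAddCommGroup E] [NormedSpace ℝ E] [CompleteSpace E]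
  [NormedAddCommGroup F] [NormedSpace ℝ F] [CompleteSpace F]

theorem stmt10_general (A T : E →L[ℝ] F) (Ap : F →L[ℝ] E)
    (h1 : A ∘L (Ap ∘L A) = A) (h2 : Ap ∘L (A ∘L Ap) = Ap)
    (hcokerA : FiniteDimensional ℝ (F ⧸ LinearMap.range (A : E →ₗ[ℝ] F)))
    (hT : ‖T - A‖ < ‖Ap‖⁻¹)
    (hcokerEq : Module.finrank ℝ (F ⧸ LinearMap.range (T : E →ₗ[ℝ] F)) =
      Module.finrank ℝ (F ⧸ LinearMap.range (A : E →ₗ[ℝ] F))) :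
    LinearMap.range (T : E →ₗ[ℝ] F) ⊓ LinearMap.ker (Ap : F →ₗ[ℝ] E) = ⊥ := by
  have hAcompl : IsCompl (LinearMap.range (A : E →ₗ[ℝ] F)) (LinearMap.ker (Ap : F →ₗ[ℝ] E)) :=
    LinearMap.isCompl_range_ker_of_comp_comp_eq _ _
      (by simpa only [toLinearMap_comp] using congrArg toLinearMap h1)
      (by simpa only [toLinearMap_comp] using congrArg toLinearMap h2)
  let e := Submodule.quotientEquivOfIsCompl _ _ hAcompl
  have : FiniteDimensional ℝ (LinearMap.ker (Ap : F →ₗ[ℝ] E)) := Module.Finite.equiv e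
  refine Submodule.inf_eq_bot_of_sup_eq_top_of_finrank_eq _ _ ?_
    (e.finrank_eq.symm.trans hcokerEq.symm)
  exact LinearMap.range_sup_ker_eq_top_of_range_le _ _
    (range_comp_eq_range_of_norm_sub_lt A T Ap h2 hT).ge

theorem stmt10 (A T : E →L[ℝ] F) (Ap : F →L[ℝ] E)
    (h1 : A ∘L (Ap ∘L A) = A) (h2 : Ap ∘L (A ∘L Ap) = Ap)
    (hkerA : FiniteDimensional ℝ (LinearMap.ker (A : E →ₗ[ℝ] F)))
    (hcokerA : FiniteDimensional ℝ (F ⧸ LinearMap.range (A : E →ₗ[ℝ] F)))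
    (hT : ‖T - A‖ < ‖Ap‖⁻¹)
    (hkerT : FiniteDimensional ℝ (LinearMap.ker (T : E →ₗ[ℝ] F)))
    (hkerEq : Module.finrank ℝ (LinearMap.ker (T : E →ₗ[ℝ] F)) = Module.finrank ℝ (LinearMap.ker (A : E →ₗ[ℝ] F)))
    (hcokerT : FiniteDimensional ℝ (F ⧸ LinearMap.range (T : E →ₗ[ℝ] F)))
    (hcokerEq : Module.finrank ℝ (F ⧸ LinearMap.range (T : E →ₗ[ℝ] F)) =
      Module.finrank ℝ (F ⧸ LinearMap.range (A : E →ₗ[ℝ] F)))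
    (hclosed : IsClosed (LinearMap.range (T : E →ₗ[ℝ] F) : Set F))
    (hcompl : (LinearMap.range (T : E →ₗ[ℝ] F)).ClosedComplemented) :
    LinearMap.range (T : E →ₗ[ℝ] F) ⊓ LinearMap.ker (Ap : F →ₗ[ℝ] E) = ⊥ :=
  stmt10_general A T Ap h1 h2 hcokerA hT hcokerEq
end

section
/- Let X ∈ B(E,F) be nonzero with generalized inverse X⁺, and let M(X) = { T ∈ B(E,F) : T(N(X)) ⊆ R(X) }. Let P denote the projection of F onto R(X) along N(X⁺), Q the projection of F onto N(X⁺) along R(X), p the projection of E onto R(X⁺) along N(X), and q the projection of E onto N(X) along R(X⁺). Then M(X) = { P T + Q T p : T ∈ B(E,F) }. -/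
/-!
Complementary projections are determined by each other: `Q = 1 - P`, so every `S` splits as
`S = P S + (1 - P) S`. The term `(1 - P) S` equals `(1 - P) S p` exactly when `S` maps
`ker p = N(X)` into `ker (1 - P) = R(X)`, which gives `T = S`. Conversely `P T + Q T p`
agrees with `P T` on `ker p`.
-/

open ContinuousLinearMap

variable {E F : Type*} [NormedAddCommGroup E] [NormedSpace ℝ E] [CompleteSpace E]
  [NormedAddCommGroup F] [NormedSpace ℝ F] [CompleteSpace F]

namespace LinearMap

variable {R M N : Type*} [Ring R] [AddCommGroup M] [Module R M] [AddCommGroup N] [Module R N]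

theorem IsIdempotentElem.eq_one_sub_of_range_eq_ker_of_ker_eq_range {P Q : N →ₗ[R] N}
    (hP : IsIdempotentElem P) (hQ : IsIdempotentElem Q)
    (hQr : range Q = ker P) (hQk : ker Q = range P) : Q = 1 - P :=
  IsIdempotentElem.ext hQ hP.one_sub
    ⟨by rw [hQr, IsIdempotentElem.ker_eq_range_one_sub hP],
      by rw [hQk, IsIdempotentElem.range_eq_ker_one_sub hP]⟩

theorem map_ker_le_range_iff_eq_add {P : N →ₗ[R] N} {p : M →ₗ[R] M}
    (hP : IsIdempotentElem P) (hp : IsIdempotentElem p) (S : M →ₗ[R] N) :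
    (ker p).map S ≤ range P ↔ S = P ∘ₗ S + (1 - P) ∘ₗ S ∘ₗ p := by
  rw [Submodule.map_le_iff_le_comap, IsIdempotentElem.range_eq_ker_one_sub hP, ← ker_comp,
    ← IsIdempotentElem.comp_eq_left_iff hp]
  have hS : S = P ∘ₗ S + (1 - P) ∘ₗ S := by rw [sub_comp, Module.End.one_eq_id, id_comp]; abel
  rw [← add_right_inj (P ∘ₗ S), ← hS, eq_comm]
  rfl

theorem map_ker_le_range_add_comp {P Q : N →ₗ[R] N} {p : M →ₗ[R] M} (T : M →ₗ[R] N) :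
    (ker p).map (P ∘ₗ T + Q ∘ₗ T ∘ₗ p) ≤ range P := by
  rintro _ ⟨x, hx, rfl⟩
  simp [mem_ker.mp hx]

end LinearMap

theorem stmt14_general (X : E →L[ℝ] F) (Xp : F →L[ℝ] E)
    (P Q : F →L[ℝ] F) (p : E →L[ℝ] E)
    (hP : P ∘L P = P) (hPr : LinearMap.range (P : F →ₗ[ℝ] F) = LinearMap.range (X : E →ₗ[ℝ] F))
    (hPk : LinearMap.ker (P : F →ₗ[ℝ] F) = LinearMap.ker (Xp : F →ₗ[ℝ] E))
    (hQ : Q ∘L Q = Q) (hQr : LinearMap.range (Q : F →ₗ[ℝ] F) = LinearMap.ker (Xp : F →ₗ[ℝ] E))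
    (hQk : LinearMap.ker (Q : F →ₗ[ℝ] F) = LinearMap.range (X : E →ₗ[ℝ] F))
    (hp : p ∘L p = p)
    (hpk : LinearMap.ker (p : E →ₗ[ℝ] E) = LinearMap.ker (X : E →ₗ[ℝ] F)) :
    ∀ S : E →L[ℝ] F,
      Submodule.map (S : E →ₗ[ℝ] F) (LinearMap.ker (X : E →ₗ[ℝ] F)) ≤ LinearMap.range (X : E →ₗ[ℝ] F) ↔
        ∃ T : E →L[ℝ] F, S = P ∘L T + Q ∘L (T ∘L p) := by
  intro S
  have hPi : IsIdempotentElem (P : F →ₗ[ℝ] F) := IsIdempotentElem.toLinearMap hP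
  have hpi : IsIdempotentElem (p : E →ₗ[ℝ] E) := IsIdempotentElem.toLinearMap hp
  have hQP : (Q : F →ₗ[ℝ] F) = 1 - P :=
    LinearMap.IsIdempotentElem.eq_one_sub_of_range_eq_ker_of_ker_eq_range hPi
      (IsIdempotentElem.toLinearMap hQ) (hQr.trans hPk.symm) (hQk.trans hPr.symm)
  rw [← hpk, ← hPr]
  constructor
  · intro hS
    refine ⟨S, coe_injective ?_⟩
    rw [toLinearMap_add, toLinearMap_comp, toLinearMap_comp, toLinearMap_comp, hQP]
    exact (LinearMap.map_ker_le_range_iff_eq_add hPi hpi S).1 hS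
  · rintro ⟨T, rfl⟩
    exact LinearMap.map_ker_le_range_add_comp (T : E →ₗ[ℝ] F)

theorem stmt14 (X : E →L[ℝ] F) (hX : X ≠ 0) (Xp : F →L[ℝ] E)
    (h1 : X ∘L (Xp ∘L X) = X) (h2 : Xp ∘L (X ∘L Xp) = Xp)
    (P Q : F →L[ℝ] F) (p q : E →L[ℝ] E)
    (hP : P ∘L P = P) (hPr : LinearMap.range (P : F →ₗ[ℝ] F) = LinearMap.range (X : E →ₗ[ℝ] F))
    (hPk : LinearMap.ker (P : F →ₗ[ℝ] F) = LinearMap.ker (Xp : F →ₗ[ℝ] E))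
    (hQ : Q ∘L Q = Q) (hQr : LinearMap.range (Q : F →ₗ[ℝ] F) = LinearMap.ker (Xp : F →ₗ[ℝ] E))
    (hQk : LinearMap.ker (Q : F →ₗ[ℝ] F) = LinearMap.range (X : E →ₗ[ℝ] F))
    (hp : p ∘L p = p) (hpr : LinearMap.range (p : E →ₗ[ℝ] E) = LinearMap.range (Xp : F →ₗ[ℝ] E))
    (hpk : LinearMap.ker (p : E →ₗ[ℝ] E) = LinearMap.ker (X : E →ₗ[ℝ] F))
    (hq : q ∘L q = q) (hqr : LinearMap.range (q : E →ₗ[ℝ] E) = LinearMap.ker (X : E →ₗ[ℝ] F))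
    (hqk : LinearMap.ker (q : E →ₗ[ℝ] E) = LinearMap.range (Xp : F →ₗ[ℝ] E)) :
    ∀ S : E →L[ℝ] F,
      Submodule.map (S : E →ₗ[ℝ] F) (LinearMap.ker (X : E →ₗ[ℝ] F)) ≤ LinearMap.range (X : E →ₗ[ℝ] F) ↔
        ∃ T : E →L[ℝ] F, S = P ∘L T + Q ∘L (T ∘L p) :=
  stmt14_general X Xp P Q p hP hPr hPk hQ hQr hQk hp hpk
end

section
/- With the notation of the previous setting (X double splitting with generalized inverse X⁺, P, Q, p, q the associated projections), the subspace E_X = { Q T q : T ∈ B(E,F) } is a topological complement of M(X) = { T : T(N(X)) ⊆ R(X) } in B(E,F), i.e., B(E,F) = M(X) ⊕ E_X. -/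
/-! With `Φ S = Q ∘ S ∘ q`, the set `M(X)` is `ker Φ` (because `range q = N(X)` and
`ker Q = R(X)`) and `E_X` is `range Φ`. Since `Q` and `q` are idempotent so is `Φ`, and the
kernel and range of a continuous idempotent are closed complements. -/

theorem LinearMap.IsIdempotentElem.existsUnique_add_mem_ker_mem_range {R M : Type*} [Ring R]
    [AddCommGroup M] [Module R M] {φ : M →ₗ[R] M} (hφ : IsIdempotentElem φ) (x : M) :
    ∃! ab : M × M, x = ab.1 + ab.2 ∧ ab.1 ∈ LinearMap.ker φ ∧ ab.2 ∈ LinearMap.range φ := by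
  have hφx : φ (φ x) = φ x := LinearMap.ext_iff.mp hφ x
  refine ⟨(x - φ x, φ x),
    ⟨(sub_add_cancel x (φ x)).symm, by simp [hφx], LinearMap.mem_range_self φ x⟩, ?_⟩
  rintro ⟨a, b⟩ ⟨rfl, ha, ⟨c, rfl⟩⟩
  have hφc : φ (φ c) = φ c := LinearMap.ext_iff.mp hφ c
  simp [LinearMap.mem_ker.mp ha, hφc]

namespace ContinuousLinearMap

variable {𝕜 E₁ E₂ F₁ F₂ : Type*} [NontriviallyNormedField 𝕜]
  [SeminormedAddCommGroup E₁] [NormedSpace 𝕜 E₁] [SeminormedAddCommGroup E₂] [NormedSpace 𝕜 E₂]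
  [SeminormedAddCommGroup F₁] [NormedSpace 𝕜 F₁] [SeminormedAddCommGroup F₂] [NormedSpace 𝕜 F₂]

noncomputable def sandwich (A : F₁ →L[𝕜] F₂) (B : E₂ →L[𝕜] E₁) :
    (E₁ →L[𝕜] F₁) →L[𝕜] (E₂ →L[𝕜] F₂) :=
  compL 𝕜 E₂ F₁ F₂ A ∘L (compL 𝕜 E₂ E₁ F₁).flip B

@[simp]
theorem sandwich_apply (A : F₁ →L[𝕜] F₂) (B : E₂ →L[𝕜] E₁) (S : E₁ →L[𝕜] F₁) :
    sandwich A B S = A ∘L (S ∘L B) :=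
  rfl

theorem sandwich_eq_zero_iff {A : F₁ →L[𝕜] F₂} {B : E₂ →L[𝕜] E₁} {S : E₁ →L[𝕜] F₁} :
    sandwich A B S = 0 ↔
      Submodule.map (S : E₁ →ₗ[𝕜] F₁) (LinearMap.range (B : E₂ →ₗ[𝕜] E₁)) ≤
        LinearMap.ker (A : F₁ →ₗ[𝕜] F₂) := by
  simp [ContinuousLinearMap.ext_iff, Submodule.map_le_iff_le_comap, LinearMap.range_le_iff_comap,
    Submodule.eq_top_iff']

theorem isIdempotentElem_sandwich {A : F₁ →L[𝕜] F₁} {B : E₁ →L[𝕜] E₁}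
    (hA : IsIdempotentElem A) (hB : IsIdempotentElem B) : IsIdempotentElem (sandwich A B) := by
  ext S x
  change A (A (S (B (B x)))) = A (S (B x))
  rw [show B (B x) = B x from DFunLike.congr_fun hB.eq x,
    show ∀ y, A (A y) = A y from DFunLike.congr_fun hA.eq]

end ContinuousLinearMap

open ContinuousLinearMap

variable {E F : Type*} [NormedAddCommGroup E] [NormedSpace ℝ E] [CompleteSpace E]
  [NormedAddCommGroup F] [NormedSpace ℝ F] [CompleteSpace F]

theorem stmt15_general (X : E →L[ℝ] F)
    (Q : F →L[ℝ] F) (q : E →L[ℝ] E)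
    (hQ : Q ∘L Q = Q)
    (hQk : LinearMap.ker (Q : F →ₗ[ℝ] F) = LinearMap.range (X : E →ₗ[ℝ] F))
    (hq : q ∘L q = q) (hqr : LinearMap.range (q : E →ₗ[ℝ] E) = LinearMap.ker (X : E →ₗ[ℝ] F)) :
    IsClosed {S : E →L[ℝ] F | Submodule.map (S : E →ₗ[ℝ] F) (LinearMap.ker (X : E →ₗ[ℝ] F)) ≤ LinearMap.range (X : E →ₗ[ℝ] F)} ∧
    IsClosed {S : E →L[ℝ] F | ∃ T : E →L[ℝ] F, S = Q ∘L (T ∘L q)} ∧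
    ∀ S : E →L[ℝ] F, ∃! TU : (E →L[ℝ] F) × (E →L[ℝ] F),
      S = TU.1 + TU.2 ∧
      Submodule.map (TU.1 : E →ₗ[ℝ] F) (LinearMap.ker (X : E →ₗ[ℝ] F)) ≤ LinearMap.range (X : E →ₗ[ℝ] F) ∧
      (∃ T : E →L[ℝ] F, TU.2 = Q ∘L (T ∘L q)) := by
  have hΦ : IsIdempotentElem (sandwich Q q) := isIdempotentElem_sandwich hQ hq
  have hM : ∀ S : E →L[ℝ] F, Submodule.map (S : E →ₗ[ℝ] F) (LinearMap.ker (X : E →ₗ[ℝ] F)) ≤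
      LinearMap.range (X : E →ₗ[ℝ] F) ↔ S ∈ (sandwich Q q).ker := by
    intro S
    rw [← hqr, ← hQk]
    exact (sandwich_eq_zero_iff (A := Q) (B := q)).symm
  have hE : ∀ S : E →L[ℝ] F, (∃ T : E →L[ℝ] F, S = Q ∘L (T ∘L q)) ↔
      S ∈ (sandwich Q q).range := by
    intro S
    simp [eq_comm]
  refine ⟨?_, ?_, fun S => ?_⟩
  · simp_rw [hM]
    exact (sandwich Q q).isClosed_ker
  · simp_rw [hE]
    exact hΦ.isClosed_range
  · simpa only [hM, hE] using
      LinearMap.IsIdempotentElem.existsUnique_add_mem_ker_mem_range hΦ.toLinearMap S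

theorem stmt15 (X : E →L[ℝ] F) (hX : X ≠ 0) (Xp : F →L[ℝ] E)
    (h1 : X ∘L (Xp ∘L X) = X) (h2 : Xp ∘L (X ∘L Xp) = Xp)
    (Q : F →L[ℝ] F) (q : E →L[ℝ] E)
    (hQ : Q ∘L Q = Q) (hQr : LinearMap.range (Q : F →ₗ[ℝ] F) = LinearMap.ker (Xp : F →ₗ[ℝ] E))
    (hQk : LinearMap.ker (Q : F →ₗ[ℝ] F) = LinearMap.range (X : E →ₗ[ℝ] F))
    (hq : q ∘L q = q) (hqr : LinearMap.range (q : E →ₗ[ℝ] E) = LinearMap.ker (X : E →ₗ[ℝ] F))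
    (hqk : LinearMap.ker (q : E →ₗ[ℝ] E) = LinearMap.range (Xp : F →ₗ[ℝ] E)) :
    IsClosed {S : E →L[ℝ] F | Submodule.map (S : E →ₗ[ℝ] F) (LinearMap.ker (X : E →ₗ[ℝ] F)) ≤ LinearMap.range (X : E →ₗ[ℝ] F)} ∧
    IsClosed {S : E →L[ℝ] F | ∃ T : E →L[ℝ] F, S = Q ∘L (T ∘L q)} ∧
    ∀ S : E →L[ℝ] F, ∃! TU : (E →L[ℝ] F) × (E →L[ℝ] F),
      S = TU.1 + TU.2 ∧
      Submodule.map (TU.1 : E →ₗ[ℝ] F) (LinearMap.ker (X : E →ₗ[ℝ] F)) ≤ LinearMap.range (X : E →ₗ[ℝ] F) ∧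
      (∃ T : E →L[ℝ] F, TU.2 = Q ∘L (T ∘L q)) :=
  stmt15_general X Q q hQ hQk hq hqr
end

section
/- Let A ∈ B(E,F) have generalized inverse A⁺. On V₁ = { X ∈ B(E,F) : ‖(X − A)A⁺‖ < 1 }, define D(X) = (X − A) P_{R(A⁺)} + C_A(A⁺,X)⁻¹ X and D₊(X) = X P_{R(A⁺)} + C_A(A⁺,X) X P_{N(A)}, where P_{R(A⁺)} and P_{N(A)} are the projections of E onto R(A⁺) and N(A) along the decomposition E = N(A) ⊕ R(A⁺), and C_A(A⁺,X) = I_F + (X−A)A⁺. Then D and D₊ are mutually inverse bijections of V₁ onto itself; in particular D(D₊(X)) = X and D₊(D(X)) = X for all X ∈ V₁, and D(A) = A. -/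
/-! With `P = A⁺A`, an operator `X` is determined by `X P` and `X (I - P)`. Both `D` and `D₊`
leave `X P`, hence also `X A⁺ = X P A⁺` and `C_A(A⁺, X)`, unchanged, while on `N(A)` they act
by left multiplication with `C_A(A⁺, X)⁻¹` and `C_A(A⁺, X)` respectively. So they are mutually
inverse, and both preserve the condition `‖(X - A) A⁺‖ < 1` defining `V₁`. -/

open ContinuousLinearMap

variable {E F : Type*} [NormedAddCommGroup E] [NormedSpace ℝ E] [CompleteSpace E]
  [NormedAddCommGroup F] [NormedSpace ℝ F] [CompleteSpace F]

/-- The map D(X) = (X - A) P_{R(A⁺)} + C_A(A⁺,X)⁻¹ X. -/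
noncomputable def mapD (A : E →L[ℝ] F) (Ap : F →L[ℝ] E) (Pr : E →L[ℝ] E)
    (X : E →L[ℝ] F) : E →L[ℝ] F :=
  (X - A) ∘L Pr + Ring.inverse (ContinuousLinearMap.id ℝ F + (X - A) ∘L Ap) ∘L X

/-- The map D₊(X) = X P_{R(A⁺)} + C_A(A⁺,X) X P_{N(A)}, where P_{N(A)} = I - P_{R(A⁺)}. -/
noncomputable def mapDstar (A : E →L[ℝ] F) (Ap : F →L[ℝ] E) (Pr : E →L[ℝ] E)
    (X : E →L[ℝ] F) : E →L[ℝ] F :=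
  X ∘L Pr + (ContinuousLinearMap.id ℝ F + (X - A) ∘L Ap) ∘L
    (X ∘L (ContinuousLinearMap.id ℝ E - Pr))

section GeneralizedInverse

variable {R M N : Type*} [Ring R] [TopologicalSpace M] [AddCommGroup M] [Module R M]
  [TopologicalSpace N] [AddCommGroup N] [Module R N]

theorem eq_of_comp_eq_of_comp_id_sub_eq [IsTopologicalAddGroup M] [IsTopologicalAddGroup N]
    (P : M →L[R] M) {X Y : M →L[R] N} (hP : Y ∘L P = X ∘L P)
    (hQ : Y ∘L (ContinuousLinearMap.id R M - P) = X ∘L (ContinuousLinearMap.id R M - P)) :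
    Y = X := by
  rwa [comp_sub, comp_sub, comp_id, comp_id, hP, sub_left_inj] at hQ

theorem comp_id_sub_eq_zero [IsTopologicalAddGroup M] {P : M →L[R] M} (hP : P ∘L P = P) :
    P ∘L (ContinuousLinearMap.id R M - P) = 0 := by
  rw [comp_sub, comp_id, hP, sub_self]

theorem id_sub_comp_id_sub [IsTopologicalAddGroup M] {P : M →L[R] M} (hP : P ∘L P = P) :
    (ContinuousLinearMap.id R M - P) ∘L (ContinuousLinearMap.id R M - P) =
      ContinuousLinearMap.id R M - P := by
  rw [sub_comp, id_comp, comp_id_sub_eq_zero hP, sub_zero]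

variable {A : M →L[R] N} {Ap : N →L[R] M}

theorem comp_comp_idem (h1 : A ∘L (Ap ∘L A) = A) : (Ap ∘L A) ∘L (Ap ∘L A) = Ap ∘L A := by
  rw [comp_assoc, h1]

theorem range_comp_eq (h2 : Ap ∘L (A ∘L Ap) = Ap) :
    LinearMap.range (Ap ∘L A : M →ₗ[R] M) = LinearMap.range (Ap : N →ₗ[R] M) := by
  refine le_antisymm (LinearMap.range_comp_le_range _ _) ?_
  conv_lhs => rw [← h2]
  exact LinearMap.range_comp_le_range (Ap : N →ₗ[R] M) (Ap ∘L A : M →ₗ[R] M)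

theorem ker_comp_eq (h1 : A ∘L (Ap ∘L A) = A) :
    LinearMap.ker (Ap ∘L A : M →ₗ[R] M) = LinearMap.ker (A : M →ₗ[R] N) := by
  refine le_antisymm ?_ (LinearMap.ker_le_ker_comp _ _)
  conv_rhs => rw [← h1]
  exact LinearMap.ker_le_ker_comp (Ap ∘L A : M →ₗ[R] M) (A : M →ₗ[R] N)

theorem eq_comp_of_range_eq_of_ker_eq (h1 : A ∘L (Ap ∘L A) = A) (h2 : Ap ∘L (A ∘L Ap) = Ap)
    {P : M →L[R] M} (hP : P ∘L P = P)
    (hPr : LinearMap.range (P : M →ₗ[R] M) = LinearMap.range (Ap : N →ₗ[R] M))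
    (hPk : LinearMap.ker (P : M →ₗ[R] M) = LinearMap.ker (A : M →ₗ[R] N)) : P = Ap ∘L A :=
  IsIdempotentElem.ext hP (comp_comp_idem h1) ⟨hPr.trans (range_comp_eq h2).symm,
    hPk.trans (ker_comp_eq h1).symm⟩

theorem comp_eq_of_comp_proj_eq (h2 : Ap ∘L (A ∘L Ap) = Ap) {X Y : M →L[R] N}
    (h : Y ∘L (Ap ∘L A) = X ∘L (Ap ∘L A)) : Y ∘L Ap = X ∘L Ap := by
  calc Y ∘L Ap = (Y ∘L (Ap ∘L A)) ∘L Ap := by rw [comp_assoc, comp_assoc, h2]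
    _ = X ∘L Ap := by rw [h, comp_assoc, comp_assoc, h2]

end GeneralizedInverse

section PerturbationMaps

variable {V W : Type*} [NormedAddCommGroup V] [NormedSpace ℝ V]
  [NormedAddCommGroup W] [NormedSpace ℝ W] {A X : V →L[ℝ] W} {Ap : W →L[ℝ] V}

/-- `C_A(A⁺, X)`. -/
noncomputable def mapC (A : V →L[ℝ] W) (Ap : W →L[ℝ] V) (X : V →L[ℝ] W) : W →L[ℝ] W :=
  ContinuousLinearMap.id ℝ W + (X - A) ∘L Ap

theorem mapD_def (P : V →L[ℝ] V) :
    mapD A Ap P X = (X - A) ∘L P + Ring.inverse (mapC A Ap X) ∘L X := rfl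

theorem mapDstar_def (P : V →L[ℝ] V) :
    mapDstar A Ap P X = X ∘L P + mapC A Ap X ∘L (X ∘L (ContinuousLinearMap.id ℝ V - P)) := rfl

theorem isUnit_mapC [CompleteSpace W] (hX : ‖(X - A) ∘L Ap‖ < 1) : IsUnit (mapC A Ap X) := by
  have h : mapC A Ap X = 1 - -((X - A) ∘L Ap) := by rw [sub_neg_eq_add, one_def]; rfl
  exact h ▸ isUnit_one_sub_of_norm_lt_one (by rwa [norm_neg])

theorem mapC_comp (h1 : A ∘L (Ap ∘L A) = A) : mapC A Ap X ∘L A = X ∘L (Ap ∘L A) := by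
  rw [mapC, add_comp, id_comp, comp_assoc, sub_comp, h1, add_sub_cancel]

theorem inverse_mapC_comp (h1 : A ∘L (Ap ∘L A) = A) (hX : IsUnit (mapC A Ap X)) :
    Ring.inverse (mapC A Ap X) ∘L (X ∘L (Ap ∘L A)) = A := by
  rw [← mapC_comp h1, ← comp_assoc, ← mul_def, Ring.inverse_mul_cancel _ hX, one_def, id_comp]

theorem sub_comp_eq_of_comp_proj_eq (h2 : Ap ∘L (A ∘L Ap) = Ap) {Y : V →L[ℝ] W}
    (h : Y ∘L (Ap ∘L A) = X ∘L (Ap ∘L A)) : (Y - A) ∘L Ap = (X - A) ∘L Ap := by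
  rw [sub_comp, sub_comp, comp_eq_of_comp_proj_eq h2 h]

theorem mapC_eq_of_comp_proj_eq (h2 : Ap ∘L (A ∘L Ap) = Ap) {Y : V →L[ℝ] W}
    (h : Y ∘L (Ap ∘L A) = X ∘L (Ap ∘L A)) : mapC A Ap Y = mapC A Ap X := by
  rw [mapC, mapC, sub_comp_eq_of_comp_proj_eq h2 h]

theorem mapD_comp_proj (h1 : A ∘L (Ap ∘L A) = A) (hX : IsUnit (mapC A Ap X)) :
    mapD A Ap (Ap ∘L A) X ∘L (Ap ∘L A) = X ∘L (Ap ∘L A) := by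
  rw [mapD_def, add_comp, comp_assoc, comp_comp_idem h1, comp_assoc, inverse_mapC_comp h1 hX,
    sub_comp, h1, sub_add_cancel]

theorem mapD_comp_compl (h1 : A ∘L (Ap ∘L A) = A) :
    mapD A Ap (Ap ∘L A) X ∘L (ContinuousLinearMap.id ℝ V - Ap ∘L A) =
      Ring.inverse (mapC A Ap X) ∘L (X ∘L (ContinuousLinearMap.id ℝ V - Ap ∘L A)) := by
  rw [mapD_def, add_comp, comp_assoc, comp_id_sub_eq_zero (comp_comp_idem h1), comp_zero,
    zero_add, comp_assoc]

theorem mapDstar_comp_proj (h1 : A ∘L (Ap ∘L A) = A) :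
    mapDstar A Ap (Ap ∘L A) X ∘L (Ap ∘L A) = X ∘L (Ap ∘L A) := by
  rw [mapDstar_def, add_comp, comp_assoc, comp_comp_idem h1, comp_assoc, comp_assoc, sub_comp,
    id_comp, comp_comp_idem h1, sub_self, comp_zero, comp_zero, add_zero]

theorem mapDstar_comp_compl (h1 : A ∘L (Ap ∘L A) = A) :
    mapDstar A Ap (Ap ∘L A) X ∘L (ContinuousLinearMap.id ℝ V - Ap ∘L A) =
      mapC A Ap X ∘L (X ∘L (ContinuousLinearMap.id ℝ V - Ap ∘L A)) := by
  rw [mapDstar_def, add_comp, comp_assoc, comp_id_sub_eq_zero (comp_comp_idem h1), comp_zero,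
    zero_add, comp_assoc, comp_assoc, id_sub_comp_id_sub (comp_comp_idem h1)]

theorem mapD_mapDstar (h1 : A ∘L (Ap ∘L A) = A) (h2 : Ap ∘L (A ∘L Ap) = Ap)
    (hX : IsUnit (mapC A Ap X)) : mapD A Ap (Ap ∘L A) (mapDstar A Ap (Ap ∘L A) X) = X := by
  have hC := mapC_eq_of_comp_proj_eq h2 (mapDstar_comp_proj (X := X) h1)
  refine eq_of_comp_eq_of_comp_id_sub_eq (Ap ∘L A) ?_ ?_
  · rw [mapD_comp_proj h1 (hC ▸ hX), mapDstar_comp_proj h1]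
  · rw [mapD_comp_compl h1, hC, mapDstar_comp_compl h1, ← comp_assoc, ← mul_def,
      Ring.inverse_mul_cancel _ hX, one_def, id_comp]

theorem mapDstar_mapD (h1 : A ∘L (Ap ∘L A) = A) (h2 : Ap ∘L (A ∘L Ap) = Ap)
    (hX : IsUnit (mapC A Ap X)) : mapDstar A Ap (Ap ∘L A) (mapD A Ap (Ap ∘L A) X) = X := by
  have hC := mapC_eq_of_comp_proj_eq h2 (mapD_comp_proj h1 hX)
  refine eq_of_comp_eq_of_comp_id_sub_eq (Ap ∘L A) ?_ ?_
  · rw [mapDstar_comp_proj h1, mapD_comp_proj h1 hX]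
  · rw [mapDstar_comp_compl h1, hC, mapD_comp_compl h1, ← comp_assoc, ← mul_def,
      Ring.mul_inverse_cancel _ hX, one_def, id_comp]

theorem mapD_self (P : V →L[ℝ] V) : mapD A Ap P A = A := by
  have hC : mapC A Ap A = 1 := by rw [mapC, sub_self, zero_comp, add_zero, one_def]
  rw [mapD_def, hC, Ring.inverse_one, sub_self, zero_comp, zero_add, one_def, id_comp]

end PerturbationMaps

theorem stmt18 (A : E →L[ℝ] F) (Ap : F →L[ℝ] E)
    (h1 : A ∘L (Ap ∘L A) = A) (h2 : Ap ∘L (A ∘L Ap) = Ap)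
    (Pr : E →L[ℝ] E) (hPr : Pr ∘L Pr = Pr)
    (hPrr : LinearMap.range (Pr : E →ₗ[ℝ] E) = LinearMap.range (Ap : F →ₗ[ℝ] E))
    (hPrk : LinearMap.ker (Pr : E →ₗ[ℝ] E) = LinearMap.ker (A : E →ₗ[ℝ] F)) :
    (∀ X : E →L[ℝ] F, ‖(X - A) ∘L Ap‖ < 1 →
      ‖(mapD A Ap Pr X - A) ∘L Ap‖ < 1 ∧
      ‖(mapDstar A Ap Pr X - A) ∘L Ap‖ < 1 ∧
      mapD A Ap Pr (mapDstar A Ap Pr X) = X ∧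
      mapDstar A Ap Pr (mapD A Ap Pr X) = X) ∧
    mapD A Ap Pr A = A := by
  obtain rfl := eq_comp_of_range_eq_of_ker_eq h1 h2 hPr hPrr hPrk
  refine ⟨fun X hX => ?_, mapD_self _⟩
  have hC := isUnit_mapC hX
  refine ⟨?_, ?_, mapD_mapDstar h1 h2 hC, mapDstar_mapD h1 h2 hC⟩
  · rwa [sub_comp_eq_of_comp_proj_eq h2 (mapD_comp_proj h1 hC)]
  · rwa [sub_comp_eq_of_comp_proj_eq h2 (mapDstar_comp_proj h1)]
end

section
/- Let A ∈ B(E,F) have generalized inverse A⁺ and suppose A is Fredholm with dim N(A) = m and codim R(A) = n. Let W = { T : ‖T − A‖ < ‖A⁺‖⁻¹ } and D(X) = (X − A) P_{R(A⁺)} + C_A(A⁺,X)⁻¹ X. Then for X ∈ W: X is Fredholm with dim N(X) = m and codim R(X) = n if and only if D(X)(N(A)) ⊆ R(A), i.e., D maps Φ_{m,n} ∩ W into M₀ = { T ∈ B(E,F) : T(N(A)) ⊆ R(A) } and conversely. -/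
/-!
Write `C = 1 + (X - A) A⁺`, invertible by the Neumann series, and `Y = C⁻¹ X`. Since
`A A⁺ A = A`, one has `C A = X A⁺ A`, i.e. `Y A⁺ A = A`. On `N(A)` the map `D(X)` coincides
with `Y`, and `X = C Y` lies in `Φ_{m,n}` iff `Y` does, so everything reduces to comparing `Y`
with `A`.

The maps `v ↦ v - A⁺ Y v` and `y ↦ y - A⁺ A y` are mutually inverse isomorphisms between
`{v ∈ N(A) | Y v ∈ R(A)}` and `N(Y)`. Hence `dim N(Y) = dim N(A)` forces this subspace to be all
of `N(A)`, which is the condition `D(X)(N(A)) ⊆ R(A)`; conversely, under that condition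
`N(Y) ≅ N(A)` and `R(Y) = R(A)`, because `Y x = A x + Y (x - A⁺ A x)`.
-/

open ContinuousLinearMap

variable {E F : Type*} [NormedAddCommGroup E] [NormedSpace ℝ E] [CompleteSpace E]
  [NormedAddCommGroup F] [NormedSpace ℝ F] [CompleteSpace F]

namespace LinearMap

section Ring

variable {R M N : Type*} [Ring R] [AddCommGroup M] [Module R M] [AddCommGroup N] [Module R N]
  {A Y : M →ₗ[R] N} {Ap : N →ₗ[R] M}

theorem map_comp_add_eq_of_le_ker {p : Submodule R M} {P : M →ₗ[R] M} (S : M →ₗ[R] N)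
    (T : M →ₗ[R] N) (hP : p ≤ ker P) : p.map (S ∘ₗ P + T) = p.map T := by
  ext y
  simp only [Submodule.mem_map, add_apply, comp_apply]
  refine exists_congr fun x => and_congr_right fun hx => ?_
  rw [mem_ker.mp (hP hx), map_zero, zero_add]

theorem range_eq_of_apply_apply_eq (hA : ∀ x, A (Ap (A x)) = A x)
    (hY : ∀ x, Y (Ap (A x)) = A x) (hker : (ker A).map Y ≤ range A) : range Y = range A := by
  refine le_antisymm ?_ fun _ ⟨x, hx⟩ => ⟨Ap (A x), hx ▸ hY x⟩
  rintro _ ⟨x, rfl⟩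
  have hx : x - Ap (A x) ∈ ker A := by simp [hA x]
  have hYx : Y x = A x + Y (x - Ap (A x)) := by simp [hY x]
  rw [hYx]
  exact add_mem (mem_range_self A x) (hker (Submodule.mem_map_of_mem hx))

noncomputable def kerInfComapEquivKer (hA : ∀ x, A (Ap (A x)) = A x)
    (hY : ∀ x, Y (Ap (A x)) = A x) : ↥(ker A ⊓ (range A).comap Y) ≃ₗ[R] ker Y :=
  LinearEquiv.ofLinearMap
    ((LinearMap.id - Ap ∘ₗ Y).restrict fun v hv => by
      obtain ⟨z, hz⟩ := (Submodule.mem_inf.mp hv).2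
      simp [← hz, hY z])
    ((LinearMap.id - Ap ∘ₗ A).restrict fun y hy =>
      Submodule.mem_inf.mpr ⟨by simp [hA y],
        Submodule.mem_comap.mpr ⟨-y, by simp [hY y, mem_ker.mp hy]⟩⟩)
    (by
      ext ⟨y, hy⟩
      simp [mem_ker.mp hy, hY y])
    (by
      ext ⟨v, hv⟩
      obtain ⟨hAv, z, hz⟩ := Submodule.mem_inf.mp hv
      simp [mem_ker.mp hAv, ← hz, hA z])

end Ring

theorem map_ker_le_range_of_finrank_ker_eq {K M N : Type*} [DivisionRing K] [AddCommGroup M]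
    [Module K M] [AddCommGroup N] [Module K N] {A Y : M →ₗ[K] N} {Ap : N →ₗ[K] M}
    [FiniteDimensional K (ker A)] (hA : ∀ x, A (Ap (A x)) = A x)
    (hY : ∀ x, Y (Ap (A x)) = A x) (h : Module.finrank K (ker Y) = Module.finrank K (ker A)) :
    (ker A).map Y ≤ range A := by
  have hK : ker A ⊓ (range A).comap Y = ker A :=
    Submodule.eq_of_le_of_finrank_eq inf_le_left ((kerInfComapEquivKer hA hY).finrank_eq.trans h)
  exact Submodule.map_le_iff_le_comap.mpr (inf_eq_left.mp hK)

end LinearMap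

namespace ContinuousLinearMap

section Topological

variable {𝕜 V W : Type*} [Field 𝕜] [AddCommGroup V] [Module 𝕜 V] [TopologicalSpace V]
  [AddCommGroup W] [Module 𝕜 W] [TopologicalSpace W] {m n : ℕ}

/-- `X.IsFredholmOfType m n` means `X ∈ Φ_{m,n}`. -/
def IsFredholmOfType (X : V →L[𝕜] W) (m n : ℕ) : Prop :=
  FiniteDimensional 𝕜 (LinearMap.ker (X : V →ₗ[𝕜] W)) ∧
    Module.finrank 𝕜 (LinearMap.ker (X : V →ₗ[𝕜] W)) = m ∧
    IsClosed (LinearMap.range (X : V →ₗ[𝕜] W) : Set W) ∧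
    FiniteDimensional 𝕜 (W ⧸ LinearMap.range (X : V →ₗ[𝕜] W)) ∧
    Module.finrank 𝕜 (W ⧸ LinearMap.range (X : V →ₗ[𝕜] W)) = n

theorem IsFredholmOfType.of_linearEquiv_ker_of_range_eq {X Y : V →L[𝕜] W}
    (hX : X.IsFredholmOfType m n)
    (e : LinearMap.ker (X : V →ₗ[𝕜] W) ≃ₗ[𝕜] LinearMap.ker (Y : V →ₗ[𝕜] W))
    (h : LinearMap.range (Y : V →ₗ[𝕜] W) = LinearMap.range (X : V →ₗ[𝕜] W)) :
    Y.IsFredholmOfType m n := by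
  obtain ⟨hfin, hm, hclosed, hfin', hn⟩ := hX
  unfold IsFredholmOfType
  rw [h, ← e.finrank_eq]
  exact ⟨e.finiteDimensional, hm, hclosed, hfin', hn⟩

theorem isFredholmOfType_units_comp_iff (u : (W →L[𝕜] W)ˣ) (Y : V →L[𝕜] W) :
    ((u : W →L[𝕜] W) ∘L Y).IsFredholmOfType m n ↔ Y.IsFredholmOfType m n := by
  set C := ContinuousLinearEquiv.ofUnit u
  have hker : LinearMap.ker ((u : W →L[𝕜] W) ∘L Y : V →ₗ[𝕜] W) = LinearMap.ker (Y : V →ₗ[𝕜] W) :=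
    LinearEquiv.ker_comp C.toLinearEquiv _
  have hrange : (LinearMap.range (Y : V →ₗ[𝕜] W)).map (C.toLinearEquiv : W →ₗ[𝕜] W) =
      LinearMap.range ((u : W →L[𝕜] W) ∘L Y : V →ₗ[𝕜] W) :=
    (LinearMap.range_comp _ _).symm
  have hquot := Submodule.Quotient.equiv _ _ C.toLinearEquiv hrange
  unfold IsFredholmOfType
  rw [hker, ← hquot.finrank_eq]
  refine and_congr_right' (and_congr_right' (and_congr ?_
    (and_congr_left' (Module.Finite.equiv_iff hquot).symm)))
  rw [← hrange, Submodule.map_coe]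
  exact C.isClosed_image

theorem isClosed_range_of_apply_apply_eq [T2Space W] {A : V →L[𝕜] W} {Ap : W →L[𝕜] V}
    (hA : ∀ x, A (Ap (A x)) = A x) : IsClosed (LinearMap.range (A : V →ₗ[𝕜] W) : Set W) := by
  have hrange : (LinearMap.range (A : V →ₗ[𝕜] W) : Set W) = {y | A (Ap y) = y} := by
    ext y
    exact ⟨by rintro ⟨x, rfl⟩; exact hA x, fun hy => ⟨Ap y, hy⟩⟩
  rw [hrange]
  exact isClosed_eq (A.continuous.comp Ap.continuous) continuous_id

theorem isFredholmOfType_iff_map_ker_le_range {A Y : V →L[𝕜] W} {Ap : W →L[𝕜] V}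
    (hAΦ : A.IsFredholmOfType m n) (hA : ∀ x, A (Ap (A x)) = A x)
    (hY : ∀ x, Y (Ap (A x)) = A x) :
    Y.IsFredholmOfType m n ↔
      (LinearMap.ker (A : V →ₗ[𝕜] W)).map (Y : V →ₗ[𝕜] W) ≤ LinearMap.range (A : V →ₗ[𝕜] W) := by
  have := hAΦ.1
  refine ⟨fun hYΦ => LinearMap.map_ker_le_range_of_finrank_ker_eq hA hY
    (hYΦ.2.1.trans hAΦ.2.1.symm), fun h => ?_⟩
  have hK := inf_eq_left.mpr (Submodule.map_le_iff_le_comap.mp h)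
  exact hAΦ.of_linearEquiv_ker_of_range_eq
    ((LinearEquiv.ofEq _ _ hK.symm).trans (LinearMap.kerInfComapEquivKer hA hY))
    (LinearMap.range_eq_of_apply_apply_eq hA hY h)

end Topological

section Normed

variable {𝕜 V W : Type*} [NontriviallyNormedField 𝕜] [NormedAddCommGroup V] [NormedSpace 𝕜 V]
  [NormedAddCommGroup W] [NormedSpace 𝕜 W] {A X : V →L[𝕜] W} {Ap : W →L[𝕜] V}

theorem isUnit_id_add_sub_comp_of_norm_lt [CompleteSpace W] (hX : ‖X - A‖ < ‖Ap‖⁻¹) :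
    IsUnit (ContinuousLinearMap.id 𝕜 W + (X - A) ∘L Ap) := by
  have hAp : 0 < ‖Ap‖ := by
    by_contra! h
    rw [norm_le_zero_iff.mp h, norm_zero, inv_zero] at hX
    exact (norm_nonneg _).not_gt hX
  have hnorm : ‖(X - A) ∘L Ap‖ < 1 :=
    (opNorm_comp_le _ _).trans_lt ((lt_mul_inv_iff₀ hAp).mp (by rwa [one_mul]))
  rw [← sub_neg_eq_add, ← one_def]
  exact isUnit_one_sub_of_norm_lt_one (by rwa [norm_neg])

theorem units_inv_apply_apply_apply_eq (hA : ∀ x, A (Ap (A x)) = A x) (u : (W →L[𝕜] W)ˣ)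
    (hu : (u : W →L[𝕜] W) = ContinuousLinearMap.id 𝕜 W + (X - A) ∘L Ap) (x : V) :
    (↑u⁻¹ : W →L[𝕜] W) (X (Ap (A x))) = A x := by
  have huA : (u : W →L[𝕜] W) (A x) = X (Ap (A x)) := by simp [hu, hA x]
  rw [← huA]
  exact congr($(u.inv_mul) (A x))

end Normed

end ContinuousLinearMap

theorem stmt19_general (A : E →L[ℝ] F) (Ap : F →L[ℝ] E)
    (h1 : A ∘L (Ap ∘L A) = A)
    (m n : ℕ)
    (hkerA : FiniteDimensional ℝ (LinearMap.ker (A : E →ₗ[ℝ] F)))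
    (hm : Module.finrank ℝ (LinearMap.ker (A : E →ₗ[ℝ] F)) = m)
    (hcokerA : FiniteDimensional ℝ (F ⧸ LinearMap.range (A : E →ₗ[ℝ] F)))
    (hn : Module.finrank ℝ (F ⧸ LinearMap.range (A : E →ₗ[ℝ] F)) = n)
    (Pr : E →L[ℝ] E)
    (hPrk : LinearMap.ker (Pr : E →ₗ[ℝ] E) = LinearMap.ker (A : E →ₗ[ℝ] F)) :
    ∀ X : E →L[ℝ] F, ‖X - A‖ < ‖Ap‖⁻¹ →
      ((FiniteDimensional ℝ (LinearMap.ker (X : E →ₗ[ℝ] F)) ∧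
        Module.finrank ℝ (LinearMap.ker (X : E →ₗ[ℝ] F)) = m ∧
        IsClosed (LinearMap.range (X : E →ₗ[ℝ] F) : Set F) ∧
        FiniteDimensional ℝ (F ⧸ LinearMap.range (X : E →ₗ[ℝ] F)) ∧
        Module.finrank ℝ (F ⧸ LinearMap.range (X : E →ₗ[ℝ] F)) = n) ↔
      Submodule.map (mapD A Ap Pr X : E →ₗ[ℝ] F) (LinearMap.ker (A : E →ₗ[ℝ] F)) ≤ LinearMap.range (A : E →ₗ[ℝ] F)) := by
  intro X hX
  have hA : ∀ x, A (Ap (A x)) = A x := fun x => congr($h1 x)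
  have hAΦ : A.IsFredholmOfType m n :=
    ⟨hkerA, hm, isClosed_range_of_apply_apply_eq hA, hcokerA, hn⟩
  obtain ⟨u, hu⟩ := isUnit_id_add_sub_comp_of_norm_lt hX
  have hD : (LinearMap.ker (A : E →ₗ[ℝ] F)).map (mapD A Ap Pr X : E →ₗ[ℝ] F) =
      (LinearMap.ker (A : E →ₗ[ℝ] F)).map ((↑u⁻¹ : F →L[ℝ] F) ∘L X : E →ₗ[ℝ] F) := by
    rw [mapD, ← hu, Ring.inverse_unit]
    exact LinearMap.map_comp_add_eq_of_le_ker _ _ hPrk.ge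
  rw [hD, ← isFredholmOfType_iff_map_ker_le_range hAΦ hA
    (units_inv_apply_apply_apply_eq hA u hu), isFredholmOfType_units_comp_iff]
  rfl

theorem stmt19 (A : E →L[ℝ] F) (Ap : F →L[ℝ] E)
    (h1 : A ∘L (Ap ∘L A) = A) (h2 : Ap ∘L (A ∘L Ap) = Ap)
    (m n : ℕ)
    (hkerA : FiniteDimensional ℝ (LinearMap.ker (A : E →ₗ[ℝ] F)))
    (hm : Module.finrank ℝ (LinearMap.ker (A : E →ₗ[ℝ] F)) = m)
    (hcokerA : FiniteDimensional ℝ (F ⧸ LinearMap.range (A : E →ₗ[ℝ] F)))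
    (hn : Module.finrank ℝ (F ⧸ LinearMap.range (A : E →ₗ[ℝ] F)) = n)
    (Pr : E →L[ℝ] E) (hPr : Pr ∘L Pr = Pr)
    (hPrr : LinearMap.range (Pr : E →ₗ[ℝ] E) = LinearMap.range (Ap : F →ₗ[ℝ] E))
    (hPrk : LinearMap.ker (Pr : E →ₗ[ℝ] E) = LinearMap.ker (A : E →ₗ[ℝ] F)) :
    ∀ X : E →L[ℝ] F, ‖X - A‖ < ‖Ap‖⁻¹ →
      ((FiniteDimensional ℝ (LinearMap.ker (X : E →ₗ[ℝ] F)) ∧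
        Module.finrank ℝ (LinearMap.ker (X : E →ₗ[ℝ] F)) = m ∧
        IsClosed (LinearMap.range (X : E →ₗ[ℝ] F) : Set F) ∧
        FiniteDimensional ℝ (F ⧸ LinearMap.range (X : E →ₗ[ℝ] F)) ∧
        Module.finrank ℝ (F ⧸ LinearMap.range (X : E →ₗ[ℝ] F)) = n) ↔
      Submodule.map (mapD A Ap Pr X : E →ₗ[ℝ] F) (LinearMap.ker (A : E →ₗ[ℝ] F)) ≤ LinearMap.range (A : E →ₗ[ℝ] F)) :=
  stmt19_general A Ap h1 m n hkerA hm hcokerA hn Pr hPrk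
end
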